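/- arXiv:2309.14895 — 7 statements merged into one kernel-verified Lean document; each statement's English description precedes it below -/
import Mathlib

section
/- Let D=(V,E) be a finite connected graph, let H: V → 2ℤ+1 be a positive height function (H(v) ≥ 1 for all v, |H(v)-H(w)| ≤ 2 on edges), and let E_fix(H) be the set of edges ⟨v,w⟩ with max{H(v),H(w)} ≥ 3. Then for any two functions h, h': V → ℤ with |h| = |h'| = H, if h and h' agree at one endpoint of an edge e ∈ E_fix(H) then they agree at both endpoints of e. Consequently, the sign of any h with |h| = H is constant on each connected component of the graph (V, E_fix(H)), and the map h ↦ (sign of h on each E_fix-component) is a bijection between height functions h with |h| = H and sign assignments σ: V/∼ → {±1}, where ∼ is the equivalence of being E_fix(H)-connected. -/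
/-- A height function: odd-valued and changing by at most 2 along edges. -/
def IsHeight {V : Type*} (G : SimpleGraph V) (h : V → ℤ) : Prop :=
  (∀ v, Odd (h v)) ∧ ∀ v w, G.Adj v w → |h v - h w| ≤ 2

/-- The graph of fixed-sign edges of a positive height function `H`. -/
def fixGraph {V : Type*} (G : SimpleGraph V) (H : V → ℤ) : SimpleGraph V where
  Adj v w := G.Adj v w ∧ 3 ≤ max (H v) (H w)
  symm := by
    constructor
    intro v w hvw
    exact ⟨hvw.1.symm, by rw [max_comm]; exact hvw.2⟩
  loopless := by
    constructor
    intro v hv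
    exact G.irrefl hv.1

/-!
A sign change along an edge forces the values `1` and `-1` at its endpoints, since
the heights differ by at most 2; so no sign changes across an edge with an endpoint of absolute
value at least 3, and the sign is constant on `fixGraph`-components, where it determines `h`
given `|h| = H`. Conversely, flipping the sign of `H` independently on each component yields a
height function, because edges between distinct components join two vertices of height 1.
-/

lemma eq_of_abs_eq_of_pos_iff {α : Type*} [AddCommGroup α] [LinearOrder α]
    [IsOrderedAddMonoid α] {a b : α} (habs : |a| = |b|) (hpos : 0 < a ↔ 0 < b) : a = b := by
  rcases abs_eq_abs.1 habs with rfl | rfl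
  · rfl
  · rcases lt_trichotomy b 0 with hb | rfl | hb
    · exact absurd (hpos.1 (neg_pos.2 hb)) hb.not_gt
    · simp
    · exact absurd (hpos.2 hb) (neg_neg_of_pos hb).not_gt

lemma Int.pos_iff_pos_of_abs_sub_le_two {a b : ℤ} (hab : |a - b| ≤ 2) (h3 : 3 ≤ max |a| |b|) :
    0 < a ↔ 0 < b := by
  rw [abs_le] at hab
  rcases le_max_iff.1 h3 with h | h <;> rw [le_abs'] at h <;> omega

lemma Int.pos_iff_of_ite_pos_units_eq {x y : ℤ}
    (h : (if 0 < x then 1 else -1 : ℤˣ) = if 0 < y then 1 else -1) : 0 < x ↔ 0 < y := by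
  split_ifs at h with hx hy hy <;> first | omega | exact absurd h (by decide)

lemma Int.ite_pos_units_mul {a : ℤ} (ha : 0 < a) (ε : ℤˣ) :
    (if 0 < (ε : ℤ) * a then 1 else -1 : ℤˣ) = ε := by
  rcases Int.units_eq_one_or ε with rfl | rfl <;> simp [ha, ha.le]

namespace IsHeight

variable {V : Type*} {G : SimpleGraph V} {H h : V → ℤ}

lemma pos_iff_of_fixGraph_adj (hh : IsHeight G h) (habs : ∀ v, |h v| = H v) {v w : V}
    (hadj : (fixGraph G H).Adj v w) : 0 < h v ↔ 0 < h w :=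
  Int.pos_iff_pos_of_abs_sub_le_two (hh.2 v w hadj.1) (by simpa only [habs] using hadj.2)

lemma pos_iff_of_fixGraph_reachable (hh : IsHeight G h) (habs : ∀ v, |h v| = H v) {v w : V}
    (hvw : (fixGraph G H).Reachable v w) : 0 < h v ↔ 0 < h w := by
  obtain ⟨p⟩ := hvw
  induction p with
  | nil => exact Iff.rfl
  | cons hadj _ ih => exact (hh.pos_iff_of_fixGraph_adj habs hadj).trans ih

-- Off `fixGraph` both endpoints of an edge have height 1, so there the signs may be chosen freely.
lemma units_mul (hH : IsHeight G H) (Hpos : ∀ v, 1 ≤ H v) (σ : V → ℤˣ)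
    (hσ : ∀ v w, (fixGraph G H).Adj v w → σ v = σ w) :
    IsHeight G fun v => (σ v : ℤ) * H v := by
  refine ⟨fun v => ?_, fun v w hvw => ?_⟩
  · rcases Int.units_eq_one_or (σ v) with hv | hv <;> simp [hv, hH.1 v]
  show |(σ v : ℤ) * H v - σ w * H w| ≤ 2
  by_cases hfix : 3 ≤ max (H v) (H w)
  · rw [hσ v w ⟨hvw, hfix⟩, ← mul_sub, abs_mul, Int.isUnit_iff_abs_eq.1 (σ w).isUnit,
      one_mul]
    exact hH.2 v w hvw
  · obtain ⟨k, hk⟩ := hH.1 v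
    obtain ⟨l, hl⟩ := hH.1 w
    have hv1 : H v = 1 := by have := Hpos v; omega
    have hw1 : H w = 1 := by have := Hpos w; omega
    rw [hv1, hw1, abs_le]
    rcases Int.units_eq_one_or (σ v) with hv | hv <;>
      rcases Int.units_eq_one_or (σ w) with hw | hw <;> simp [hv, hw]

end IsHeight

theorem stmt_2_general {V : Type*} (G : SimpleGraph V)
    (H : V → ℤ) (Hheight : IsHeight G H) (Hpos : ∀ v, 1 ≤ H v) :
    (∀ h h' : V → ℤ, IsHeight G h → IsHeight G h' →
        (∀ v, |h v| = H v) → (∀ v, |h' v| = H v) →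
        ∀ v w, (fixGraph G H).Adj v w → h v = h' v → h w = h' w) ∧
    (∀ h : V → ℤ, IsHeight G h → (∀ v, |h v| = H v) →
        ∀ v w : V, (fixGraph G H).Reachable v w → (0 < h v ↔ 0 < h w)) ∧
    Function.Bijective
      (fun h : {h : V → ℤ // IsHeight G h ∧ ∀ v, |h v| = H v} =>
        fun comp : (fixGraph G H).ConnectedComponent =>
          (if 0 < h.1 (Quot.out comp) then 1 else -1 : ℤˣ)) := by
  refine ⟨fun h h' hh hh' habs habs' v w hadj heq => ?_,
    fun h hh habs v w => hh.pos_iff_of_fixGraph_reachable habs, ?_, fun σ => ?_⟩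
  · refine eq_of_abs_eq_of_pos_iff ((habs w).trans (habs' w).symm) ?_
    rw [← hh.pos_iff_of_fixGraph_adj habs hadj, ← hh'.pos_iff_of_fixGraph_adj habs' hadj, heq]
  · rintro ⟨h₁, hh₁, habs₁⟩ ⟨h₂, hh₂, habs₂⟩ heq
    refine Subtype.ext <| funext fun v =>
      eq_of_abs_eq_of_pos_iff ((habs₁ v).trans (habs₂ v).symm) ?_
    have hv : (fixGraph G H).Reachable v ((fixGraph G H).connectedComponentMk v).out :=
      SimpleGraph.ConnectedComponent.exact (Quot.out_eq _).symm
    rw [hh₁.pos_iff_of_fixGraph_reachable habs₁ hv,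
      hh₂.pos_iff_of_fixGraph_reachable habs₂ hv]
    exact Int.pos_iff_of_ite_pos_units_eq (congrFun heq _)
  · have hh := Hheight.units_mul Hpos (fun v => σ ((fixGraph G H).connectedComponentMk v))
      fun v w hvw => congrArg σ (SimpleGraph.ConnectedComponent.sound hvw.reachable)
    refine ⟨⟨_, hh, fun v => ?_⟩, funext fun c => ?_⟩
    · rw [abs_mul, Int.isUnit_iff_abs_eq.1 (σ _).isUnit, one_mul, abs_of_pos (Hpos v)]
    · have hc : (fixGraph G H).connectedComponentMk c.out = c := c.out_eq
      simpa only [hc] using Int.ite_pos_units_mul (Hpos c.out) (σ c)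

theorem stmt_2 {V : Type*} [Fintype V] (G : SimpleGraph V) (hconn : G.Connected)
    (H : V → ℤ) (Hheight : IsHeight G H) (Hpos : ∀ v, 1 ≤ H v) :
    (∀ h h' : V → ℤ, IsHeight G h → IsHeight G h' →
        (∀ v, |h v| = H v) → (∀ v, |h' v| = H v) →
        ∀ v w, (fixGraph G H).Adj v w → h v = h' v → h w = h' w) ∧
    (∀ h : V → ℤ, IsHeight G h → (∀ v, |h v| = H v) →
        ∀ v w : V, (fixGraph G H).Reachable v w → (0 < h v ↔ 0 < h w)) ∧
    Function.Bijective
      (fun h : {h : V → ℤ // IsHeight G h ∧ ∀ v, |h v| = H v} =>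
        fun comp : (fixGraph G H).ConnectedComponent =>
          (if 0 < h.1 (Quot.out comp) then 1 else -1 : ℤˣ)) :=
  stmt_2_general G H Hheight Hpos
end

section
/- Let D=(V,E) be a finite connected graph with edge weights c_e ≥ 1, H a positive height function on D, and E_fix(H) the set of edges with max of the two endpoint values ≥ 3. Define the Ising weight of σ: 𝒱 → {±1} on the quotient graph 𝒟 = D/∼ (where ∼ is E_fix-connectivity) as W_Ising(σ) = ∏_{⟨u,v⟩ ∈ E} c_e^{𝟙{σ(u)=σ(v)}}. Then there is a constant K = K(D,H) > 0 such that for every height function h with |h| = H, the height weight W(h) = ∏_{⟨v,w⟩∈E} c_e^{𝟙{h(v)=h(w)}} satisfies W(h) = K · W_Ising(σ_h), where σ_h is the sign function of h on the components of E_fix(H). -/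
theorem Sym2.forall_mem_pair_forall_mem_pair {α : Type*} {R : α → α → Prop}
    (refl : ∀ x, R x x) (symm : ∀ x y, R x y → R y x) {a b : α} :
    (∀ x ∈ s(a, b), ∀ y ∈ s(a, b), R x y) ↔ R a b := by
  simp only [Sym2.forall_mem_pair]
  exact ⟨fun h => h.1.2, fun h => ⟨⟨refl a, h⟩, symm a b h, refl b⟩⟩

namespace Int

theorem eq_iff_pos_iff_pos_of_abs_eq {a b : ℤ} (ha : Odd a) (hb : Odd b) (hab : |a| = |b|) :
    a = b ↔ (0 < a ↔ 0 < b) := by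
  obtain ⟨k, rfl⟩ := ha
  obtain ⟨l, rfl⟩ := hb
  rcases abs_eq_abs.mp hab with h | h <;> omega

theorem pos_iff_pos_of_abs_sub_le_two_s3 {a b : ℤ} (ha : Odd a) (hb : Odd b) (hab : |a - b| ≤ 2)
    (hne : |a| ≠ |b|) : 0 < a ↔ 0 < b := by
  obtain ⟨k, rfl⟩ := ha
  obtain ⟨l, rfl⟩ := hb
  rw [abs_le] at hab
  rcases abs_cases (2 * k + 1) with h | h <;> rcases abs_cases (2 * l + 1) with h' | h' <;> omega

theorem ite_pos_iff_pos_eq_ite_abs_eq_mul_ite_eq {R : Type*} [MulOneClass R] {a b : ℤ}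
    (ha : Odd a) (hb : Odd b) (hab : |a - b| ≤ 2) (c : R) :
    (if (0 < a ↔ 0 < b) then c else 1)
      = (if |a| = |b| then 1 else c) * (if a = b then c else 1) := by
  by_cases habs : |a| = |b|
  · rw [if_pos habs, one_mul, if_congr (eq_iff_pos_iff_pos_of_abs_eq ha hb habs).symm rfl rfl]
  · have hne : a ≠ b := fun h => habs (congrArg _ h)
    rw [if_pos (pos_iff_pos_of_abs_sub_le_two_s3 ha hb hab habs), if_neg habs, if_neg hne, mul_one]

end Int

namespace IsHeight

variable {V : Type*} [Fintype V] [DecidableEq V] {G : SimpleGraph V} {h H : V → ℤ}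

theorem ite_sameSign_eq_ite_level_mul_ite_eq {R : Type*} [MulOneClass R] (hh : IsHeight G h)
    (habs : ∀ v, |h v| = H v) (c : Sym2 V → R) {e : Sym2 V} (he : e ∈ G.edgeSet) :
    (if ∀ v ∈ e, ∀ w ∈ e, (0 < h v ↔ 0 < h w) then c e else 1)
      = (if ∀ v ∈ e, ∀ w ∈ e, H v = H w then 1 else c e)
        * (if ∀ v ∈ e, ∀ w ∈ e, h v = h w then c e else 1) := by
  induction e with
  | h v w =>
    have hsign := Sym2.forall_mem_pair_forall_mem_pair (R := fun x y => (0 < h x ↔ 0 < h y))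
      (fun _ => Iff.rfl) (fun _ _ => Iff.symm) (a := v) (b := w)
    have hlevel := Sym2.forall_mem_pair_forall_mem_pair (R := fun x y => H x = H y)
      (fun _ => rfl) (fun _ _ => Eq.symm) (a := v) (b := w)
    have hflat := Sym2.forall_mem_pair_forall_mem_pair (R := fun x y => h x = h y)
      (fun _ => rfl) (fun _ _ => Eq.symm) (a := v) (b := w)
    rw [if_congr hsign rfl rfl, if_congr hlevel rfl rfl, if_congr hflat rfl rfl, ← habs, ← habs]
    exact Int.ite_pos_iff_pos_eq_ite_abs_eq_mul_ite_eq (hh.1 v) (hh.1 w) (hh.2 v w he) (c s(v, w))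

end IsHeight

theorem stmt_3_general {V : Type*} [Fintype V] [DecidableEq V] (G : SimpleGraph V)
    [DecidableRel G.Adj]
    (c : Sym2 V → ℝ) (hc : ∀ e ∈ G.edgeSet, 1 ≤ c e)
    (H : V → ℤ) :
    ∃ K : ℝ, 0 < K ∧
      ∀ h : V → ℤ, IsHeight G h → (∀ v, |h v| = H v) →
        (∏ e ∈ G.edgeFinset, if ∀ v ∈ e, ∀ w ∈ e, h v = h w then c e else 1)
          = K * ∏ e ∈ G.edgeFinset,
              if ∀ v ∈ e, ∀ w ∈ e, (0 < h v ↔ 0 < h w) then c e else 1 := by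
  set B := ∏ e ∈ G.edgeFinset, if ∀ v ∈ e, ∀ w ∈ e, H v = H w then 1 else c e
  have hB : 0 < B := Finset.prod_pos fun e he => by
    split_ifs
    · exact one_pos
    · exact one_pos.trans_le (hc e (SimpleGraph.mem_edgeFinset.mp he))
  refine ⟨B⁻¹, inv_pos.mpr hB, fun h hh habs => ?_⟩
  rw [Finset.prod_congr rfl fun e he =>
      hh.ite_sameSign_eq_ite_level_mul_ite_eq habs c (SimpleGraph.mem_edgeFinset.mp he),
    Finset.prod_mul_distrib, inv_mul_cancel_left₀ hB.ne']

theorem stmt_3 {V : Type*} [Fintype V] [DecidableEq V] (G : SimpleGraph V)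
    [DecidableRel G.Adj] (hconn : G.Connected)
    (c : Sym2 V → ℝ) (hc : ∀ e ∈ G.edgeSet, 1 ≤ c e)
    (H : V → ℤ) (Hheight : IsHeight G H) (Hpos : ∀ v, 1 ≤ H v) :
    ∃ K : ℝ, 0 < K ∧
      ∀ h : V → ℤ, IsHeight G h → (∀ v, |h v| = H v) →
        (∏ e ∈ G.edgeFinset, if ∀ v ∈ e, ∀ w ∈ e, h v = h w then c e else 1)
          = K * ∏ e ∈ G.edgeFinset,
              if ∀ v ∈ e, ∀ w ∈ e, (0 < h v ↔ 0 < h w) then c e else 1 :=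
  stmt_3_general G c hc H
end

section
/- Let X be an integer-valued random variable supported on the odd integers, whose probability mass function p(k) = P[X = 2k+1] (k ∈ ℤ) is log-concave (p(k)² ≥ p(k-1)p(k+1) for all k), symmetric about the origin in the sense p(k) = p(-k-1), and suppose there exist M ∈ ℕ and ε ∈ (0,1) with p(M+1) ≤ (1-ε)·p(M). Then p(m+1) ≤ (1-ε)·p(m) for all m ≥ M, and consequently E[X²] < ∞ with E[X²] ≤ C(M, ε) for an explicit constant depending only on M, ε, and P[|X| ≤ 2M+1] ≤ 1. -/
private lemma geomSummable (r : ℝ) (hr0 : 0 < r) (hr1 : r < 1) (N : ℕ) :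
    Summable (fun n : ℕ => r ^ (n - N) * ((2 * n + 1 : ℝ)) ^ 2) := by
  have hbase : Summable (fun n : ℕ => (r ^ N)⁻¹ * ((4 : ℝ) * ((n:ℝ)^2 * r^n) + 4 * ((n:ℝ)^1 * r^n) + (n:ℝ)^0 * r^n)) := by
    refine Summable.mul_left _ ?_
    have h2 := summable_pow_mul_geometric_of_norm_lt_one (R := ℝ) 2 (by rwa [Real.norm_eq_abs, abs_of_nonneg hr0.le])
    have h1 := summable_pow_mul_geometric_of_norm_lt_one (R := ℝ) 1 (by rwa [Real.norm_eq_abs, abs_of_nonneg hr0.le])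
    have h0 := summable_pow_mul_geometric_of_norm_lt_one (R := ℝ) 0 (by rwa [Real.norm_eq_abs, abs_of_nonneg hr0.le])
    exact ((h2.mul_left 4).add (h1.mul_left 4)).add h0
  refine hbase.of_nonneg_of_le (fun n => by positivity) (fun n => ?_)
  have hkey : r ^ (n - N) ≤ (r ^ N)⁻¹ * r ^ n := by
    rw [le_inv_mul_iff₀ (by positivity), ← pow_add]
    exact pow_le_pow_of_le_one hr0.le hr1.le (by omega)
  calc r ^ (n - N) * (2 * (n:ℝ) + 1) ^ 2 ≤ ((r ^ N)⁻¹ * r ^ n) * (2 * (n:ℝ) + 1) ^ 2 := by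
        apply mul_le_mul_of_nonneg_right hkey; positivity
    _ = (r ^ N)⁻¹ * ((4 : ℝ) * ((n:ℝ)^2 * r^n) + 4 * ((n:ℝ)^1 * r^n) + (n:ℝ)^0 * r^n) := by ring

theorem stmt_7 (M : ℕ) (ε : ℝ) (hε : 0 < ε) (hε1 : ε < 1) :
    ∃ C : ℝ, ∀ p : ℤ → ℝ, (∀ k, 0 ≤ p k) → HasSum p 1 →
      (∀ k : ℤ, p (k - 1) * p (k + 1) ≤ p k ^ 2) →
      (∀ k₁ k₂ k : ℤ, k₁ ≤ k → k ≤ k₂ → 0 < p k₁ → 0 < p k₂ → 0 < p k) →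
      (∀ k : ℤ, p k = p (-k - 1)) →
      p ((M : ℤ) + 1) ≤ (1 - ε) * p (M : ℤ) →
      (∀ m : ℤ, (M : ℤ) ≤ m → p (m + 1) ≤ (1 - ε) * p m) ∧
      Summable (fun k : ℤ => p k * ((2 * k + 1 : ℤ) : ℝ) ^ 2) ∧
      (∑' k : ℤ, p k * ((2 * k + 1 : ℤ) : ℝ) ^ 2) ≤ C := by
  set r : ℝ := 1 - ε with hr
  have hr0 : 0 < r := by simp [hr]; linarith
  have hr1 : r < 1 := by simp [hr]; linarith
  -- dominating function
  set g : ℤ → ℝ := fun k => r ^ ((if 0 ≤ k then k else -k - 1).toNat - M) * ((2 * k + 1 : ℤ) : ℝ) ^ 2 with hg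
  have hgnat : ∀ n : ℕ, g n = r ^ (n - M) * ((2 * (n:ℝ) + 1)) ^ 2 := by
    intro n
    simp only [hg]
    rw [if_pos (by exact_mod_cast Nat.zero_le n), Int.toNat_natCast]
    push_cast
    ring_nf
  have hgneg : ∀ n : ℕ, g (-(n+1 : ℤ)) = r ^ (n - M) * ((2 * (n:ℝ) + 1)) ^ 2 := by
    intro n
    simp only [hg]
    rw [if_neg (by omega)]
    have h1 : (-(-(n+1 : ℤ)) - 1).toNat = n := by omega
    have h2 : ((2 * (-(n+1 : ℤ)) + 1 : ℤ) : ℝ) ^ 2 = (2 * (n:ℝ) + 1) ^ 2 := by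
      push_cast; ring
    rw [h1, h2]
  have hgsum : Summable g := by
    apply Summable.of_nat_of_neg_add_one
    · simpa only [hgnat] using geomSummable r hr0 hr1 M
    · simpa only [hgneg] using geomSummable r hr0 hr1 M
  refine ⟨∑' k : ℤ, g k, ?_⟩
  intro p hpnn hsum hlc hpos hsymm hgap
  -- Part 1: ratio propagation
  have stepN : ∀ j : ℕ, p ((M : ℤ) + j + 1) ≤ r * p ((M : ℤ) + j) := by
    intro j
    induction j with
    | zero => simpa using hgap
    | succ j ih =>
      have hj : (M : ℤ) + (j + 1 : ℕ) = ((M : ℤ) + j) + 1 := by push_cast; ring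
      rw [hj]
      set m : ℤ := (M : ℤ) + j with hmdef
      rcases eq_or_lt_of_le (hpnn (m + 1)) with h0 | h1
      · -- p (m+1) = 0 ⟹ p (m+2) = 0
        have h2 : p (m + 1 + 1) = 0 := by
          by_contra hne
          have hp2 : 0 < p (m + 1 + 1) := lt_of_le_of_ne (hpnn _) (Ne.symm hne)
          have hneg : 0 < p (-(m + 1 + 1) - 1) := by rw [← hsymm]; exact hp2
          have := hpos (-(m + 1 + 1) - 1) (m + 1 + 1) (m + 1) (by omega) (by omega) hneg hp2
          rw [← h0] at this; exact absurd this (lt_irrefl 0)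
        rw [h2, ← h0, mul_zero]
      · have hpm : 0 < p m := by
          rcases eq_or_lt_of_le (hpnn m) with h | h
          · exfalso; nlinarith
          · exact h
        have hl := hlc (m + 1)
        rw [add_sub_cancel_right] at hl
        nlinarith [mul_le_mul_of_nonneg_right ih (le_of_lt h1), mul_pos hpm h1]
  have step : ∀ m : ℤ, (M : ℤ) ≤ m → p (m + 1) ≤ r * p m := by
    intro m hm
    have hm' : m = (M : ℤ) + ((m - M).toNat : ℕ) := by omega
    rw [hm']
    exact stepN _
  -- geometric bound
  have ple1 : ∀ k, p k ≤ 1 := fun k => le_hasSum hsum k (fun _ _ => hpnn _)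
  have geom : ∀ j : ℕ, p ((M : ℤ) + j) ≤ r ^ j := by
    intro j
    induction j with
    | zero => simpa using ple1 (M : ℤ)
    | succ j ih =>
      have hs := step ((M : ℤ) + j) (by omega)
      calc p ((M : ℤ) + (j + 1 : ℕ)) = p (((M : ℤ) + j) + 1) := by push_cast; ring_nf
        _ ≤ r * p ((M : ℤ) + j) := hs
        _ ≤ r * r ^ j := mul_le_mul_of_nonneg_left ih hr0.le
        _ = r ^ (j + 1 : ℕ) := by ring
  -- pointwise domination
  have hdom : ∀ k : ℤ, p k * ((2 * k + 1 : ℤ) : ℝ) ^ 2 ≤ g k := by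
    intro k
    have hsq : (0 : ℝ) ≤ ((2 * k + 1 : ℤ) : ℝ) ^ 2 := sq_nonneg _
    apply mul_le_mul_of_nonneg_right _ hsq
    set n : ℤ := if 0 ≤ k then k else -k - 1 with hn
    have hn0 : 0 ≤ n := by simp only [hn]; split <;> omega
    have hpk : p k = p n := by
      simp only [hn]; split
      · rfl
      · rw [hsymm k]
    rw [hpk]
    rcases le_or_gt (M : ℤ) n with hMn | hMn
    · have hj : n = (M : ℤ) + (n.toNat - M : ℕ) := by omega
      calc p n = p ((M : ℤ) + (n.toNat - M : ℕ)) := by rw [← hj]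
        _ ≤ r ^ (n.toNat - M) := geom _
    · have : n.toNat - M = 0 := by omega
      rw [this, pow_zero]
      exact ple1 n
  have hsumm : Summable (fun k : ℤ => p k * ((2 * k + 1 : ℤ) : ℝ) ^ 2) :=
    hgsum.of_nonneg_of_le (fun k => mul_nonneg (hpnn k) (sq_nonneg _)) hdom
  exact ⟨fun m hm => step m hm, hsumm, Summable.tsum_le_tsum hdom hsumm hgsum⟩
end

section
/- Let G = (V,E) be a finite connected graph and let Ġ = (V̇, Ė) be its 'dotted' graph, obtained by subdividing each edge of G with one new midpoint vertex; declare old vertices odd and midpoint vertices even. Then restriction to the old vertices V is a surjection from the set of graph homomorphisms g: V̇ → ℤ (|g(u)-g(v)|=1 on edges of Ġ, parity matching the bipartition) onto the set of height functions h: V → 2ℤ+1 with |h(v)-h(w)| ≤ 2 on edges of G. Moreover, the number of homomorphisms g restricting to a given h equals 2^{#{e=⟨v,w⟩∈E : h(v)=h(w)}}, so the restriction of a uniform random homomorphism (with boundary condition ξ on Δ ⊆ V) has the law of the random Lipschitz model on G with constant edge weight c = 2 and the same boundary condition. -/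
/-- The dotted graph of `G`: each edge of `G` is subdivided by one midpoint vertex. -/
def dottedGraph {V : Type*} (G : SimpleGraph V) : SimpleGraph (V ⊕ G.edgeSet) where
  Adj x y :=
    (∃ (v : V) (e : G.edgeSet), x = Sum.inl v ∧ y = Sum.inr e ∧ v ∈ (e : Sym2 V)) ∨
    (∃ (v : V) (e : G.edgeSet), x = Sum.inr e ∧ y = Sum.inl v ∧ v ∈ (e : Sym2 V))
  symm := by
    constructor
    rintro x y (⟨v, e, rfl, rfl, hm⟩ | ⟨v, e, rfl, rfl, hm⟩)
    · exact Or.inr ⟨v, e, rfl, rfl, hm⟩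
    · exact Or.inl ⟨v, e, rfl, rfl, hm⟩
  loopless := by
    constructor
    rintro x (⟨v, e, rfl, hy, hm⟩ | ⟨v, e, rfl, hy, hm⟩) <;> cases hy

/-- A graph homomorphism to `ℤ` on the dotted graph: odd on the original vertices, even on
the midpoints, and changing by exactly one along each edge. -/
def IsDotHom {V : Type*} (G : SimpleGraph V) (g : V ⊕ G.edgeSet → ℤ) : Prop :=
  (∀ v : V, Odd (g (Sum.inl v))) ∧ (∀ e : G.edgeSet, Even (g (Sum.inr e))) ∧
    ∀ x y, (dottedGraph G).Adj x y → |g x - g y| = 1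

/-!
An extension of `h` to the dotted graph is determined by its values at the midpoints, and these
can be chosen independently of each other: the midpoint of `e = ⟨v, w⟩` must lie at distance one
from the odd values `h v` and `h w`, which leaves the two values `h v ± 1` when `h v = h w` and the
single value `(h v + h w) / 2` when `|h v - h w| = 2`. So `h` has exactly `2 ^ k` extensions, `k`
the number of edges on which `h` is constant; in particular it has one, and the numbers of
extensions of two height functions are in the ratio of their Lipschitz weights with `c = 2`.
-/

def midpointValues {V : Type*} (h : V → ℤ) (e : Sym2 V) : Set ℤ :=
  {m | ∀ v ∈ e, |h v - m| = 1}

lemma setOf_abs_sub_eq_one (a : ℤ) : {m : ℤ | |a - m| = 1} = {a - 1, a + 1} := by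
  ext m
  simp only [Set.mem_ofPred_eq, Set.mem_insert_iff, Set.mem_singleton_iff, abs_eq zero_le_one]
  omega

lemma ncard_setOf_abs_sub_eq_one (a : ℤ) : {m : ℤ | |a - m| = 1}.ncard = 2 := by
  rw [setOf_abs_sub_eq_one, Set.ncard_pair (by omega)]

lemma setOf_abs_sub_eq_one_and_eq_singleton {a b : ℤ} (ha : Odd a) (hb : Odd b)
    (hab : |a - b| ≤ 2) (hne : a ≠ b) :
    {m : ℤ | |a - m| = 1 ∧ |b - m| = 1} = {(a + b) / 2} := by
  obtain ⟨k, rfl⟩ := ha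
  obtain ⟨l, rfl⟩ := hb
  ext m
  simp only [Set.mem_ofPred_eq, Set.mem_singleton_iff, abs_eq zero_le_one]
  rw [abs_le] at hab
  omega

lemma even_of_odd_of_abs_sub_eq_one {a m : ℤ} (ha : Odd a) (h : |a - m| = 1) : Even m := by
  obtain ⟨k, rfl⟩ := ha
  rw [abs_eq zero_le_one] at h
  rcases h with h | h
  · exact ⟨k, by omega⟩
  · exact ⟨k + 1, by omega⟩

section DottedGraph

variable {V : Type*} {G : SimpleGraph V} {h : V → ℤ}

lemma midpointValues_mk (v w : V) :
    midpointValues h s(v, w) = {m | |h v - m| = 1 ∧ |h w - m| = 1} := by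
  simp [midpointValues]

lemma forall_mem_sym2_eq_iff (v w : V) :
    (∀ x ∈ s(v, w), ∀ y ∈ s(v, w), h x = h y) ↔ h v = h w := by
  simp only [Sym2.mem_iff, forall_eq_or_imp, forall_eq]
  grind

lemma ncard_midpointValues [DecidablePred fun e : Sym2 V => ∀ x ∈ e, ∀ y ∈ e, h x = h y]
    (hh : IsHeight G h) {e : Sym2 V} (he : e ∈ G.edgeSet) :
    (midpointValues h e).ncard = if ∀ x ∈ e, ∀ y ∈ e, h x = h y then 2 else 1 := by
  induction e using Sym2.ind with | _ v w => ?_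
  rw [midpointValues_mk]
  split_ifs with heq <;> rw [forall_mem_sym2_eq_iff] at heq
  · simpa [heq] using ncard_setOf_abs_sub_eq_one (h w)
  · rw [setOf_abs_sub_eq_one_and_eq_singleton (hh.1 v) (hh.1 w) (hh.2 v w he) heq,
      Set.ncard_singleton]

lemma isDotHom_iff_mem_midpointValues (hodd : ∀ v, Odd (h v)) {g : V ⊕ G.edgeSet → ℤ}
    (hg : ∀ v, g (Sum.inl v) = h v) :
    IsDotHom G g ↔ ∀ e : G.edgeSet, g (Sum.inr e) ∈ midpointValues h e := by
  constructor
  · rintro ⟨-, -, hadj⟩ e v hv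
    simpa [hg] using hadj (Sum.inl v) (Sum.inr e) (Or.inl ⟨v, e, rfl, rfl, hv⟩)
  · intro hmid
    refine ⟨fun v => hg v ▸ hodd v, fun e => ?_, ?_⟩
    · obtain ⟨⟨v, w⟩, he⟩ := Quot.exists_rep (e : Sym2 V)
      exact even_of_odd_of_abs_sub_eq_one (hodd v) (hmid e v (he ▸ Sym2.mem_mk_left v w))
    · rintro x y (⟨v, e, rfl, rfl, hv⟩ | ⟨v, e, rfl, rfl, hv⟩)
      · simpa [hg] using hmid e v hv
      · simpa [hg, abs_sub_comm] using hmid e v hv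

abbrev dotExtensions (G : SimpleGraph V) (h : V → ℤ) : Set (V ⊕ G.edgeSet → ℤ) :=
  {g | IsDotHom G g ∧ ∀ v, g (Sum.inl v) = h v}

def dotExtensionsEquivPi (hodd : ∀ v, Odd (h v)) :
    dotExtensions G h ≃ ∀ e : G.edgeSet, midpointValues h e where
  toFun g e := ⟨g.1 (Sum.inr e), (isDotHom_iff_mem_midpointValues hodd g.2.2).1 g.2.1 e⟩
  invFun f := ⟨Sum.elim h fun e => f e,
    (isDotHom_iff_mem_midpointValues hodd fun _ => rfl).2 fun e => (f e).2, fun _ => rfl⟩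
  left_inv g := by
    ext (v | e)
    · exact (g.2.2 v).symm
    · rfl
  right_inv _ := rfl

lemma ncard_dotExtensions [Fintype V] [DecidableEq V] [DecidableRel G.Adj] (hh : IsHeight G h) :
    (dotExtensions G h).ncard =
      2 ^ (G.edgeFinset.filter fun e => ∀ v ∈ e, ∀ w ∈ e, h v = h w).card := by
  rw [← Nat.card_coe_set_eq, Nat.card_congr (dotExtensionsEquivPi hh.1), Nat.card_pi]
  simp_rw [Nat.card_coe_set_eq]
  rw [← Finset.prod_subtype G.edgeFinset (fun _ => SimpleGraph.mem_edgeFinset)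
    fun e => (midpointValues h e).ncard]
  rw [Finset.prod_congr rfl fun e he => ncard_midpointValues hh (SimpleGraph.mem_edgeFinset.1 he),
    Finset.prod_ite, Finset.prod_const, Finset.prod_const_one, mul_one]

end DottedGraph

theorem stmt_10_general {V : Type*} [Fintype V] [DecidableEq V] (G : SimpleGraph V)
    [DecidableRel G.Adj] (Δ : Set V) (ξ : V → ℤ) :
    (∀ h : V → ℤ, IsHeight G h →
      ∃ g : V ⊕ G.edgeSet → ℤ, IsDotHom G g ∧ ∀ v, g (Sum.inl v) = h v) ∧
    (∀ h : V → ℤ, IsHeight G h →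
      {g : V ⊕ G.edgeSet → ℤ | IsDotHom G g ∧ ∀ v, g (Sum.inl v) = h v}.ncard
        = 2 ^ (G.edgeFinset.filter fun e => ∀ v ∈ e, ∀ w ∈ e, h v = h w).card) ∧
    (∀ h h' : V → ℤ, IsHeight G h → IsHeight G h' →
      (∀ v ∈ Δ, h v = ξ v) → (∀ v ∈ Δ, h' v = ξ v) →
      ({g : V ⊕ G.edgeSet → ℤ | IsDotHom G g ∧ ∀ v, g (Sum.inl v) = h v}.ncard : ℤ) *
          2 ^ (G.edgeFinset.filter fun e => ∀ v ∈ e, ∀ w ∈ e, h' v = h' w).card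
        = ({g : V ⊕ G.edgeSet → ℤ | IsDotHom G g ∧ ∀ v, g (Sum.inl v) = h' v}.ncard : ℤ) *
          2 ^ (G.edgeFinset.filter fun e => ∀ v ∈ e, ∀ w ∈ e, h v = h w).card) := by
  refine ⟨fun h hh => ?_, fun h hh => ncard_dotExtensions hh, fun h h' hh hh' _ _ => ?_⟩
  · exact Set.nonempty_of_ncard_ne_zero ((ncard_dotExtensions hh).trans_ne (by positivity))
  · rw [ncard_dotExtensions hh, ncard_dotExtensions hh']
    push_cast
    ring

theorem stmt_10 {V : Type*} [Fintype V] [DecidableEq V] (G : SimpleGraph V)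
    [DecidableRel G.Adj] (hconn : G.Connected) (Δ : Set V) (ξ : V → ℤ) :
    (∀ h : V → ℤ, IsHeight G h →
      ∃ g : V ⊕ G.edgeSet → ℤ, IsDotHom G g ∧ ∀ v, g (Sum.inl v) = h v) ∧
    (∀ h : V → ℤ, IsHeight G h →
      {g : V ⊕ G.edgeSet → ℤ | IsDotHom G g ∧ ∀ v, g (Sum.inl v) = h v}.ncard
        = 2 ^ (G.edgeFinset.filter fun e => ∀ v ∈ e, ∀ w ∈ e, h v = h w).card) ∧
    (∀ h h' : V → ℤ, IsHeight G h → IsHeight G h' →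
      (∀ v ∈ Δ, h v = ξ v) → (∀ v ∈ Δ, h' v = ξ v) →
      ({g : V ⊕ G.edgeSet → ℤ | IsDotHom G g ∧ ∀ v, g (Sum.inl v) = h v}.ncard : ℤ) *
          2 ^ (G.edgeFinset.filter fun e => ∀ v ∈ e, ∀ w ∈ e, h' v = h' w).card
        = ({g : V ⊕ G.edgeSet → ℤ | IsDotHom G g ∧ ∀ v, g (Sum.inl v) = h' v}.ncard : ℤ) *
          2 ^ (G.edgeFinset.filter fun e => ∀ v ∈ e, ∀ w ∈ e, h v = h w).card) :=
  stmt_10_general G Δ ξ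
end

section
/- Let G=(V,E) be a finite connected triangulation graph, i.e., E is covered by mutually edge-disjoint triangles t_1,…,t_m, and let G_Y be its triangle–star (∇–Y) transform, obtained by replacing the three edges of each triangle t_i by three edges to a new star vertex ϖ_i. Then restriction to V is a surjection from homomorphisms g on G_Y onto height functions h on G, and the number of homomorphisms restricting to a given h equals 2^{#{i : h is constant on the three corners of t_i}}. Moreover, denoting k_i(h) ∈ {0,1,3} the number of equal-height pairs among the three corners of t_i, one has ∏_{i=1}^m (√2)^{k_i(h)} = (√2)^m · 2^{#{i : h flat on t_i}}; hence the restriction of a uniform random homomorphism on G_Y has the law of the random Lipschitz model on G with constant edge weight c = √2. -/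
/-- The triangle–star (∇–Y) transform: each triangle `i` of the triangulation gets a new star
vertex adjacent to the three corners `a i`, `b i`, `c i`. -/
def starGraph {V ι : Type*} (a b c : ι → V) : SimpleGraph (V ⊕ ι) where
  Adj x y :=
    (∃ (v : V) (i : ι), x = Sum.inl v ∧ y = Sum.inr i ∧ (v = a i ∨ v = b i ∨ v = c i)) ∨
    (∃ (v : V) (i : ι), x = Sum.inr i ∧ y = Sum.inl v ∧ (v = a i ∨ v = b i ∨ v = c i))
  symm := by
    constructor
    rintro x y (⟨v, i, rfl, rfl, hm⟩ | ⟨v, i, rfl, rfl, hm⟩)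
    · exact Or.inr ⟨v, i, rfl, rfl, hm⟩
    · exact Or.inl ⟨v, i, rfl, rfl, hm⟩
  loopless := by
    constructor
    rintro x (⟨v, i, rfl, hy, hm⟩ | ⟨v, i, rfl, hy, hm⟩) <;> simp at hy

/-- A graph homomorphism to `ℤ` on the ∇–Y transform: odd on the original vertices, even on the
star vertices, and changing by exactly one along each edge. -/
def IsStarHom {V ι : Type*} (a b c : ι → V) (g : V ⊕ ι → ℤ) : Prop :=
  (∀ v : V, Odd (g (Sum.inl v))) ∧ (∀ i : ι, Even (g (Sum.inr i))) ∧
    ∀ x y, (starGraph a b c).Adj x y → |g x - g y| = 1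

/-- The number of triangles on which `h` is flat (constant on the three corners). -/
def flatCount {V ι : Type*} [Fintype ι] (a b c : ι → V) (h : V → ℤ) : ℕ :=
  (Finset.univ.filter fun i : ι => h (a i) = h (b i) ∧ h (b i) = h (c i)).card

/-- The number of equal-height pairs among the three corners of triangle `i`. -/
def eqPairs {V ι : Type*} (a b c : ι → V) (h : V → ℤ) (i : ι) : ℕ :=
  (if h (a i) = h (b i) then 1 else 0) + (if h (b i) = h (c i) then 1 else 0) +
    (if h (c i) = h (a i) then 1 else 0)

/-!
Restricting a homomorphism `g` on the ∇–Y transform to `V` gives a height function `h`, and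
conversely the extensions of `h` are chosen independently at each star vertex `ϖ_i`: its value
must be adjacent to the three odd heights at the corners of `t_i`. Three odd integers pairwise
within `2` take at most two values `m - 2` and `m`; if they are all equal to `m` there are two
choices `m ± 1`, otherwise exactly one, `m - 1`. The same dichotomy gives `k_i(h) = 3` on flat
triangles and `k_i(h) = 1` on all others, whence the weight identity.
-/

section Triangle

variable {x y z : ℤ}

def starChoices (x y z : ℤ) : Finset ℤ :=
  {x - 1, x + 1} ∩ {y - 1, y + 1} ∩ {z - 1, z + 1}

lemma mem_starChoices {w : ℤ} :
    w ∈ starChoices x y z ↔ |x - w| = 1 ∧ |y - w| = 1 ∧ |z - w| = 1 := by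
  simp only [starChoices, Finset.mem_inter, Finset.mem_insert, Finset.mem_singleton,
    abs_eq zero_le_one]
  omega

lemma card_starChoices (hx : Odd x) (hy : Odd y) (hz : Odd z)
    (hxy : |x - y| ≤ 2) (hyz : |y - z| ≤ 2) (hzx : |z - x| ≤ 2) :
    (starChoices x y z).card = if x = y ∧ y = z then 2 else 1 := by
  rw [Int.odd_iff] at hx hy hz
  rw [abs_le] at hxy hyz hzx
  split_ifs with hflat
  · obtain ⟨rfl, rfl⟩ := hflat
    simp only [starChoices, Finset.inter_self]
    exact Finset.card_pair (by omega)
  · rw [Finset.card_eq_one]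
    refine ⟨max (max x y) z - 1, Finset.ext fun w => ?_⟩
    simp only [starChoices, Finset.mem_inter, Finset.mem_insert, Finset.mem_singleton]
    omega

lemma eqPairs_count_eq (hx : Odd x) (hy : Odd y) (hz : Odd z)
    (hxy : |x - y| ≤ 2) (hyz : |y - z| ≤ 2) (hzx : |z - x| ≤ 2) :
    ((if x = y then 1 else 0) + (if y = z then 1 else 0) + (if z = x then 1 else 0) : ℕ)
      = if x = y ∧ y = z then 3 else 1 := by
  rw [Int.odd_iff] at hx hy hz
  rw [abs_le] at hxy hyz hzx
  split_ifs <;> omega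

end Triangle

section StarTransform

variable {V ι : Type*} {a b c : ι → V} {h : V → ℤ}

def homFibre (a b c : ι → V) (h : V → ℤ) : Set (V ⊕ ι → ℤ) :=
  {g | IsStarHom a b c g ∧ ∀ v, g (Sum.inl v) = h v}

lemma isStarHom_sumElim_iff (hodd : ∀ v, Odd (h v)) {s : ι → ℤ} :
    IsStarHom a b c (Sum.elim h s) ↔ ∀ i, s i ∈ starChoices (h (a i)) (h (b i)) (h (c i)) := by
  constructor
  · rintro ⟨-, -, hadj⟩ i
    exact mem_starChoices.2 ⟨hadj _ _ (Or.inl ⟨a i, i, rfl, rfl, Or.inl rfl⟩),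
      hadj _ _ (Or.inl ⟨b i, i, rfl, rfl, Or.inr (Or.inl rfl)⟩),
      hadj _ _ (Or.inl ⟨c i, i, rfl, rfl, Or.inr (Or.inr rfl)⟩)⟩
  · intro hs
    refine ⟨hodd, fun i => ?_, ?_⟩
    · have hai := (mem_starChoices.1 (hs i)).1
      have hodd_ai := Int.odd_iff.1 (hodd (a i))
      rw [abs_eq zero_le_one] at hai
      rw [Sum.elim_inr, Int.even_iff]
      omega
    · rintro x y (⟨v, i, rfl, rfl, hv⟩ | ⟨v, i, rfl, rfl, hv⟩) <;>
        obtain ⟨ha, hb, hc⟩ := mem_starChoices.1 (hs i) <;>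
        simp only [Sum.elim_inl, Sum.elim_inr, abs_sub_comm (s i)] <;>
        rcases hv with rfl | rfl | rfl <;> assumption

lemma homFibre_eq_image (hodd : ∀ v, Odd (h v)) :
    homFibre a b c h =
      Sum.elim h '' Set.univ.pi fun i => ↑(starChoices (h (a i)) (h (b i)) (h (c i))) := by
  ext g
  simp only [Set.mem_image, Set.mem_univ_pi, Finset.mem_coe]
  constructor
  · rintro ⟨hg, hrestr⟩
    have hg_eq : Sum.elim h (g ∘ Sum.inr) = g := by
      ext (v | i)
      exacts [(hrestr v).symm, rfl]
    exact ⟨g ∘ Sum.inr, (isStarHom_sumElim_iff hodd).1 (hg_eq ▸ hg), hg_eq⟩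
  · rintro ⟨s, hs, rfl⟩
    exact ⟨(isStarHom_sumElim_iff hodd).2 hs, fun _ => rfl⟩

lemma ncard_homFibre_eq_prod [Fintype ι] (hodd : ∀ v, Odd (h v)) :
    (homFibre a b c h).ncard = ∏ i, (starChoices (h (a i)) (h (b i)) (h (c i))).card := by
  classical
  rw [homFibre_eq_image hodd, ← Fintype.coe_piFinset,
    Set.ncard_image_of_injective _ Sum.elim_injective', Set.ncard_coe_finset,
    Fintype.card_piFinset]

lemma prod_ite_flat_eq_pow_flatCount [Fintype ι] {M : Type*} [CommMonoid M] (m : M) :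
    ∏ i, (if h (a i) = h (b i) ∧ h (b i) = h (c i) then m else 1) = m ^ flatCount a b c h := by
  rw [← Finset.prod_filter, Finset.prod_const, flatCount]

variable {G : SimpleGraph V}

lemma IsHeight.ncard_homFibre [Fintype ι] (hh : IsHeight G h)
    (htri : ∀ i, G.Adj (a i) (b i) ∧ G.Adj (b i) (c i) ∧ G.Adj (c i) (a i)) :
    (homFibre a b c h).ncard = 2 ^ flatCount a b c h := by
  obtain ⟨hodd, hstep⟩ := hh
  rw [ncard_homFibre_eq_prod hodd, ← prod_ite_flat_eq_pow_flatCount]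
  refine Finset.prod_congr rfl fun i _ => ?_
  obtain ⟨hab, hbc, hca⟩ := htri i
  exact card_starChoices (hodd _) (hodd _) (hodd _) (hstep _ _ hab) (hstep _ _ hbc)
    (hstep _ _ hca)

lemma IsHeight.sqrt_two_pow_eqPairs (hh : IsHeight G h)
    (htri : ∀ i, G.Adj (a i) (b i) ∧ G.Adj (b i) (c i) ∧ G.Adj (c i) (a i)) (i : ι) :
    √2 ^ eqPairs a b c h i = √2 * if h (a i) = h (b i) ∧ h (b i) = h (c i) then 2 else 1 := by
  obtain ⟨hodd, hstep⟩ := hh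
  obtain ⟨hab, hbc, hca⟩ := htri i
  rw [eqPairs, eqPairs_count_eq (hodd _) (hodd _) (hodd _) (hstep _ _ hab) (hstep _ _ hbc)
    (hstep _ _ hca)]
  split_ifs
  · rw [pow_succ', pow_two, Real.mul_self_sqrt zero_le_two]
  · rw [pow_one, mul_one]

lemma IsHeight.prod_sqrt_two_pow_eqPairs [Fintype ι] (hh : IsHeight G h)
    (htri : ∀ i, G.Adj (a i) (b i) ∧ G.Adj (b i) (c i) ∧ G.Adj (c i) (a i)) :
    ∏ i, √2 ^ eqPairs a b c h i = √2 ^ Fintype.card ι * 2 ^ flatCount a b c h := by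
  simp_rw [hh.sqrt_two_pow_eqPairs htri, Finset.prod_mul_distrib, Finset.prod_const,
    prod_ite_flat_eq_pow_flatCount, Finset.card_univ]

end StarTransform

theorem stmt_11_general {V ι : Type*} [Fintype ι]
    (G : SimpleGraph V) (a b c : ι → V)
    (htri : ∀ i, s(a i, b i) ∈ G.edgeSet ∧ s(b i, c i) ∈ G.edgeSet ∧ s(c i, a i) ∈ G.edgeSet)
    (Δ : Set V) (ξ : V → ℤ) :
    (∀ h : V → ℤ, IsHeight G h →
      ∃ g : V ⊕ ι → ℤ, IsStarHom a b c g ∧ ∀ v, g (Sum.inl v) = h v) ∧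
    (∀ h : V → ℤ, IsHeight G h →
      {g : V ⊕ ι → ℤ | IsStarHom a b c g ∧ ∀ v, g (Sum.inl v) = h v}.ncard
        = 2 ^ flatCount a b c h) ∧
    (∀ h : V → ℤ, IsHeight G h →
      (∏ i : ι, Real.sqrt 2 ^ eqPairs a b c h i)
        = Real.sqrt 2 ^ Fintype.card ι * 2 ^ flatCount a b c h) ∧
    (∀ h h' : V → ℤ, IsHeight G h → IsHeight G h' →
      (∀ v ∈ Δ, h v = ξ v) → (∀ v ∈ Δ, h' v = ξ v) →
      ({g : V ⊕ ι → ℤ | IsStarHom a b c g ∧ ∀ v, g (Sum.inl v) = h v}.ncard : ℝ) *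
          ∏ i : ι, Real.sqrt 2 ^ eqPairs a b c h' i
        = ({g : V ⊕ ι → ℤ | IsStarHom a b c g ∧ ∀ v, g (Sum.inl v) = h' v}.ncard : ℝ) *
          ∏ i : ι, Real.sqrt 2 ^ eqPairs a b c h i) := by
  have hadj : ∀ i, G.Adj (a i) (b i) ∧ G.Adj (b i) (c i) ∧ G.Adj (c i) (a i) := htri
  have hfibre (h : V → ℤ) (hh : IsHeight G h) :
      {g : V ⊕ ι → ℤ | IsStarHom a b c g ∧ ∀ v, g (Sum.inl v) = h v}.ncard
        = 2 ^ flatCount a b c h :=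
    hh.ncard_homFibre hadj
  have hweight (h : V → ℤ) (hh : IsHeight G h) := hh.prod_sqrt_two_pow_eqPairs hadj
  refine ⟨fun h hh => ?_, hfibre, hweight, fun h h' hh hh' _ _ => ?_⟩
  · exact Set.nonempty_of_ncard_ne_zero ((hfibre h hh).trans_ne (by positivity))
  · rw [hfibre h hh, hfibre h' hh', hweight h hh, hweight h' hh']
    push_cast
    ring

theorem stmt_11 {V ι : Type*} [Fintype V] [DecidableEq V] [Fintype ι]
    (G : SimpleGraph V) (hconn : G.Connected) (a b c : ι → V)
    (htri : ∀ i, s(a i, b i) ∈ G.edgeSet ∧ s(b i, c i) ∈ G.edgeSet ∧ s(c i, a i) ∈ G.edgeSet)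
    (hdistinct : ∀ i, s(a i, b i) ≠ s(b i, c i) ∧ s(b i, c i) ≠ s(c i, a i) ∧
      s(c i, a i) ≠ s(a i, b i))
    (hcover : ∀ e ∈ G.edgeSet, ∃! i : ι, e = s(a i, b i) ∨ e = s(b i, c i) ∨ e = s(c i, a i))
    (Δ : Set V) (ξ : V → ℤ) :
    (∀ h : V → ℤ, IsHeight G h →
      ∃ g : V ⊕ ι → ℤ, IsStarHom a b c g ∧ ∀ v, g (Sum.inl v) = h v) ∧
    (∀ h : V → ℤ, IsHeight G h →
      {g : V ⊕ ι → ℤ | IsStarHom a b c g ∧ ∀ v, g (Sum.inl v) = h v}.ncard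
        = 2 ^ flatCount a b c h) ∧
    (∀ h : V → ℤ, IsHeight G h →
      (∏ i : ι, Real.sqrt 2 ^ eqPairs a b c h i)
        = Real.sqrt 2 ^ Fintype.card ι * 2 ^ flatCount a b c h) ∧
    (∀ h h' : V → ℤ, IsHeight G h → IsHeight G h' →
      (∀ v ∈ Δ, h v = ξ v) → (∀ v ∈ Δ, h' v = ξ v) →
      ({g : V ⊕ ι → ℤ | IsStarHom a b c g ∧ ∀ v, g (Sum.inl v) = h v}.ncard : ℝ) *
          ∏ i : ι, Real.sqrt 2 ^ eqPairs a b c h' i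
        = ({g : V ⊕ ι → ℤ | IsStarHom a b c g ∧ ∀ v, g (Sum.inl v) = h' v}.ncard : ℝ) *
          ∏ i : ι, Real.sqrt 2 ^ eqPairs a b c h i) :=
  stmt_11_general G a b c htri Δ ξ
end

section
/- (Holley criterion for monotone coupling on a finite state space.) Let S be a finite partially ordered set of configurations (e.g., functions V → ℤ with the pointwise order restricted to a finite set), and let μ, μ' be irreducible probability measures on S in the single-site-update sense. Suppose (a) there exist h ≼ h' with μ[h] > 0 and μ'[h'] > 0, and (b) for every site x, every k, and all compatible off-x configurations χ ≼ χ', the single-site conditional laws satisfy μ[h(x) ≥ k | h off x = χ] ≤ μ'[h(x) ≥ k | h off x = χ']. Then μ is stochastically dominated by μ': there exists a coupling ν of (h, h') with marginals μ, μ' and ν[h ≼ h'] = 1; in particular ∫F dμ ≤ ∫F dμ' for every increasing F: S → ℝ. -/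
/-!
Among all couplings of `μ` and `μ'` (a compact set) pick one maximising the mass of the ordered
pairs. For each site `x`, the heat-bath updates at `x` of `μ` and `μ'` admit a coupled update
that keeps ordered pairs ordered (the quantile coupling of the two conditional laws, monotone by
Holley's condition) and moves unordered pairs independently. Applied to an optimal coupling it
gives a coupling with no less ordered mass, hence an optimal one, and it cannot have moved any
mass from an unordered pair to an ordered one. So the unordered pairs charged by optimal
couplings are closed under single-site moves of either coordinate; by irreducibility such a pair
would lead to the ordered pair `(f₀, g₀)` of the hypothesis. Hence an optimal coupling charges
only ordered pairs.
-/

/-- Irreducibility in the single-site-update sense: any two configurations of positive measure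
are joined by a path of single-site changes through configurations of positive measure. -/
def IrreducibleSS {V : Type*} (μ : (V → ℤ) → ℝ) : Prop :=
  ∀ f g : V → ℤ, 0 < μ f → 0 < μ g →
    ∃ (m : ℕ) (path : ℕ → V → ℤ), path 0 = f ∧ path m = g ∧
      (∀ i ≤ m, 0 < μ (path i)) ∧
      ∀ i < m, ∃ x : V, ∀ y : V, y ≠ x → path (i + 1) y = path i y

open Finset Fintype Function MeasureTheory Relation
open scoped Classical

noncomputable section

section Couplings

variable {α : Type*} {s : Finset α} {μ μ' : α → ℝ} {ρ : α × α → ℝ}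

structure IsCouplingOn (s : Finset α) (μ μ' : α → ℝ) (ρ : α × α → ℝ) : Prop where
  nonneg : ∀ q, 0 ≤ ρ q
  eq_zero_of_notMem : ∀ q ∉ s ×ˢ s, ρ q = 0
  marginal_fst : ∀ f, ∑ g ∈ s, ρ (f, g) = μ f
  marginal_snd : ∀ g, ∑ f ∈ s, ρ (f, g) = μ' g

namespace IsCouplingOn

theorem apply_le_fst (hρ : IsCouplingOn s μ μ' ρ) (q : α × α) : ρ q ≤ μ q.1 := by
  rw [← hρ.marginal_fst]
  by_cases hq : q ∈ s ×ˢ s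
  · exact single_le_sum (f := fun g => ρ (q.1, g)) (fun g _ => hρ.nonneg _) (mem_product.1 hq).2
  · rw [hρ.eq_zero_of_notMem q hq]
    exact sum_nonneg fun g _ => hρ.nonneg _

theorem apply_le_snd (hρ : IsCouplingOn s μ μ' ρ) (q : α × α) : ρ q ≤ μ' q.2 := by
  rw [← hρ.marginal_snd]
  by_cases hq : q ∈ s ×ˢ s
  · exact single_le_sum (f := fun f => ρ (f, q.2)) (fun f _ => hρ.nonneg _) (mem_product.1 hq).1
  · rw [hρ.eq_zero_of_notMem q hq]
    exact sum_nonneg fun f _ => hρ.nonneg _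

theorem marginals_pos (hρ : IsCouplingOn s μ μ' ρ) {q : α × α} (hq : 0 < ρ q) :
    0 < μ q.1 ∧ 0 < μ' q.2 :=
  ⟨hq.trans_le (hρ.apply_le_fst q), hq.trans_le (hρ.apply_le_snd q)⟩

theorem mem_of_ne_zero (hρ : IsCouplingOn s μ μ' ρ) {q : α × α} (hq : ρ q ≠ 0) : q ∈ s ×ˢ s :=
  not_imp_comm.1 (hρ.eq_zero_of_notMem q) hq

theorem sum_eq (hρ : IsCouplingOn s μ μ' ρ) : ∑ q ∈ s ×ˢ s, ρ q = ∑ f ∈ s, μ f := by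
  rw [sum_product]
  exact sum_congr rfl fun f _ => hρ.marginal_fst f

theorem eq_zero_of_fst_notMem (hρ : IsCouplingOn s μ μ' ρ) {f : α} (hf : f ∉ s) : μ f = 0 := by
  rw [← hρ.marginal_fst]
  exact sum_eq_zero fun g _ => hρ.eq_zero_of_notMem _ fun h => hf (mem_product.1 h).1

theorem eq_zero_of_snd_notMem (hρ : IsCouplingOn s μ μ' ρ) {g : α} (hg : g ∉ s) : μ' g = 0 := by
  rw [← hρ.marginal_snd]
  exact sum_eq_zero fun f _ => hρ.eq_zero_of_notMem _ fun h => hg (mem_product.1 h).2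

theorem tsum_fst (hρ : IsCouplingOn s μ μ' ρ) (f : α) : ∑' g, ρ (f, g) = μ f := by
  rw [tsum_eq_sum fun g hg => hρ.eq_zero_of_notMem _ fun h => hg (mem_product.1 h).2,
    hρ.marginal_fst]

theorem tsum_snd (hρ : IsCouplingOn s μ μ' ρ) (g : α) : ∑' f, ρ (f, g) = μ' g := by
  rw [tsum_eq_sum fun f hf => hρ.eq_zero_of_notMem _ fun h => hf (mem_product.1 h).1,
    hρ.marginal_snd]

theorem tsum_mul_le_of_monotone [Preorder α] (hρ : IsCouplingOn s μ μ' ρ)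
    (hle : ∀ q, ρ q ≠ 0 → q.1 ≤ q.2) {F : α → ℝ} (hF : Monotone F) :
    ∑' f, μ f * F f ≤ ∑' f, μ' f * F f := by
  rw [tsum_eq_sum (s := s) fun f hf => by rw [hρ.eq_zero_of_fst_notMem hf, zero_mul],
    tsum_eq_sum (s := s) fun f hf => by rw [hρ.eq_zero_of_snd_notMem hf, zero_mul]]
  simp only [← hρ.marginal_fst, ← hρ.marginal_snd, sum_mul]
  rw [sum_comm (s := s) (t := s) (f := fun g f => ρ (f, g) * F g)]
  refine sum_le_sum fun f _ => sum_le_sum fun g _ => ?_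
  rcases eq_or_ne (ρ (f, g)) 0 with h | h
  · simp [h]
  · exact mul_le_mul_of_nonneg_left (hF (hle _ h)) (hρ.nonneg _)

end IsCouplingOn

theorem isCouplingOn_mul (hμ : ∀ f, 0 ≤ μ f) (hμ' : ∀ f, 0 ≤ μ' f) (hμs : ∀ f ∉ s, μ f = 0)
    (hμ's : ∀ f ∉ s, μ' f = 0) (hμ1 : ∑ f ∈ s, μ f = 1) (hμ'1 : ∑ f ∈ s, μ' f = 1) :
    IsCouplingOn s μ μ' fun q => μ q.1 * μ' q.2 where
  nonneg q := mul_nonneg (hμ _) (hμ' _)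
  eq_zero_of_notMem q hq := by
    rcases not_and_or.1 (mem_product.not.1 hq) with h | h
    · rw [hμs _ h, zero_mul]
    · rw [hμ's _ h, mul_zero]
  marginal_fst f := by simp only [← mul_sum, hμ'1, mul_one]
  marginal_snd g := by simp only [← sum_mul, hμ1, one_mul]

theorem isCompact_setOf_isCouplingOn : IsCompact {ρ : α × α → ℝ | IsCouplingOn s μ μ' ρ} := by
  have hclosed : IsClosed {ρ : α × α → ℝ | IsCouplingOn s μ μ' ρ} := by
    have h : {ρ : α × α → ℝ | IsCouplingOn s μ μ' ρ} =
        (⋂ q, {ρ | 0 ≤ ρ q}) ∩ (⋂ q ∈ (↑(s ×ˢ s) : Set (α × α))ᶜ, {ρ | ρ q = 0}) ∩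
          (⋂ f, {ρ | ∑ g ∈ s, ρ (f, g) = μ f}) ∩ ⋂ g, {ρ | ∑ f ∈ s, ρ (f, g) = μ' g} := by
      ext ρ
      simp only [Set.mem_ofPred_eq, Set.mem_inter_iff, Set.mem_iInter, Set.mem_compl_iff,
        mem_coe]
      exact ⟨fun h => ⟨⟨⟨h.1, h.2⟩, h.3⟩, h.4⟩, fun h => ⟨h.1.1.1, h.1.1.2, h.1.2, h.2⟩⟩
    rw [h]
    refine (((isClosed_iInter fun q => isClosed_le continuous_const (continuous_apply q)).inter
      (isClosed_biInter fun q _ => isClosed_eq (continuous_apply q) continuous_const)).inter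
      (isClosed_iInter fun f => isClosed_eq ?_ continuous_const)).inter
      (isClosed_iInter fun g => isClosed_eq ?_ continuous_const) <;>
    exact continuous_finsetSum _ fun _ _ => continuous_apply _
  refine (isCompact_univ_pi fun q => isCompact_Icc (a := 0) (b := μ q.1)).of_isClosed_subset
    hclosed fun ρ hρ q _ => ⟨hρ.nonneg q, hρ.apply_le_fst q⟩

end Couplings

section Dynamics

variable {α : Type*} [Preorder α] {s : Finset α} {μ μ' : α → ℝ} {ρ : α × α → ℝ}

def orderedMass (s : Finset α) (ρ : α × α → ℝ) : ℝ :=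
  ∑ q ∈ s ×ˢ s with q.1 ≤ q.2, ρ q

def kernelStep (s : Finset α) (Q : α × α → α × α → ℝ) (ρ : α × α → ℝ)
    (q : α × α) : ℝ :=
  ∑ p ∈ s ×ˢ s, ρ p * Q p q

structure IsMonotoneCoupledKernel (s : Finset α) (μ μ' : α → ℝ) (P P' : α → α → ℝ)
    (Q : α × α → α × α → ℝ) : Prop where
  isCouplingOn : ∀ p, 0 < μ p.1 → 0 < μ' p.2 → IsCouplingOn s (P p.1) (P' p.2) (Q p)
  sum_eq_one : ∀ f, 0 < μ f → ∑ h ∈ s, P f h = 1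
  invariant : ∀ h, ∑ f ∈ s, μ f * P f h = μ h
  invariant' : ∀ h, ∑ f ∈ s, μ' f * P' f h = μ' h
  le_of_le : ∀ p, 0 < μ p.1 → 0 < μ' p.2 → p.1 ≤ p.2 → ∀ q, Q p q ≠ 0 → q.1 ≤ q.2

namespace IsMonotoneCoupledKernel

variable {P P' : α → α → ℝ} {Q : α × α → α × α → ℝ}

theorem apply_mul_nonneg (hQ : IsMonotoneCoupledKernel s μ μ' P P' Q) (hρ : IsCouplingOn s μ μ' ρ)
    (p q : α × α) : 0 ≤ ρ p * Q p q := by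
  rcases (hρ.nonneg p).eq_or_lt with h | h
  · rw [← h, zero_mul]
  · obtain ⟨h₁, h₂⟩ := hρ.marginals_pos h
    exact mul_nonneg h.le ((hQ.isCouplingOn p h₁ h₂).nonneg q)

theorem isCouplingOn_kernelStep (hQ : IsMonotoneCoupledKernel s μ μ' P P' Q)
    (hρ : IsCouplingOn s μ μ' ρ) : IsCouplingOn s μ μ' (kernelStep s Q ρ) := by
  have hsupp : ∀ p, ρ p ≠ 0 → IsCouplingOn s (P p.1) (P' p.2) (Q p) := fun p hp =>
    have h := hρ.marginals_pos ((hρ.nonneg p).lt_of_ne' hp)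
    hQ.isCouplingOn p h.1 h.2
  refine ⟨fun q => sum_nonneg fun p _ => hQ.apply_mul_nonneg hρ p q, fun q hq => ?_, fun h => ?_,
    fun k => ?_⟩
  · refine sum_eq_zero fun p _ => ?_
    rcases eq_or_ne (ρ p) 0 with hp | hp
    · rw [hp, zero_mul]
    · rw [(hsupp p hp).eq_zero_of_notMem q hq, mul_zero]
  · have hrow : ∀ p, ρ p * ∑ k ∈ s, Q p (h, k) = ρ p * P p.1 h := fun p => by
      rcases eq_or_ne (ρ p) 0 with hp | hp
      · rw [hp, zero_mul, zero_mul]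
      · rw [(hsupp p hp).marginal_fst]
    simp only [kernelStep]
    rw [sum_comm]
    simp only [← mul_sum, hrow, sum_product, ← sum_mul, hρ.marginal_fst, hQ.invariant]
  · have hcol : ∀ p, ρ p * ∑ h ∈ s, Q p (h, k) = ρ p * P' p.2 k := fun p => by
      rcases eq_or_ne (ρ p) 0 with hp | hp
      · rw [hp, zero_mul, zero_mul]
      · rw [(hsupp p hp).marginal_snd]
    simp only [kernelStep]
    rw [sum_comm]
    simp only [← mul_sum, hcol, sum_product_right, ← sum_mul, hρ.marginal_snd, hQ.invariant']

theorem orderedMass_kernelStep (hQ : IsMonotoneCoupledKernel s μ μ' P P' Q)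
    (hρ : IsCouplingOn s μ μ' ρ) :
    orderedMass s (kernelStep s Q ρ) = orderedMass s ρ +
      ∑ p ∈ s ×ˢ s with ¬p.1 ≤ p.2, ρ p * ∑ q ∈ s ×ˢ s with q.1 ≤ q.2, Q p q := by
  have hord : ∀ p ∈ {p ∈ s ×ˢ s | p.1 ≤ p.2}, ρ p * ∑ q ∈ s ×ˢ s with q.1 ≤ q.2, Q p q = ρ p := by
    intro p hp
    rcases (hρ.nonneg p).eq_or_lt with h | h
    · rw [← h, zero_mul]
    obtain ⟨h₁, h₂⟩ := hρ.marginals_pos h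
    rw [sum_filter_of_ne fun q _ => hQ.le_of_le p h₁ h₂ (mem_filter.1 hp).2 q,
      (hQ.isCouplingOn p h₁ h₂).sum_eq, hQ.sum_eq_one _ h₁, mul_one]
  simp only [orderedMass, kernelStep]
  rw [sum_comm]
  simp only [← mul_sum]
  rw [← sum_filter_add_sum_filter_not (s ×ˢ s) (fun p => p.1 ≤ p.2), sum_congr rfl hord]

end IsMonotoneCoupledKernel

def IsOptimalCoupling (s : Finset α) (μ μ' : α → ℝ) (ρ : α × α → ℝ) : Prop :=
  IsCouplingOn s μ μ' ρ ∧ IsMaxOn (orderedMass s) {σ | IsCouplingOn s μ μ' σ} ρ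

theorem exists_isOptimalCoupling (h : ∃ ρ, IsCouplingOn s μ μ' ρ) :
    ∃ ρ, IsOptimalCoupling s μ μ' ρ :=
  isCompact_setOf_isCouplingOn.exists_isMaxOn h
    (continuous_finsetSum _ fun q _ => continuous_apply q).continuousOn

def IsOptimalDefect (s : Finset α) (μ μ' : α → ℝ) (p : α × α) : Prop :=
  ¬p.1 ≤ p.2 ∧ ∃ ρ, IsOptimalCoupling s μ μ' ρ ∧ 0 < ρ p

theorem IsOptimalDefect.pos {p : α × α} (hp : IsOptimalDefect s μ μ' p) :
    0 < μ p.1 ∧ 0 < μ' p.2 :=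
  have ⟨_, _, hρ, hρp⟩ := hp
  hρ.1.marginals_pos hρp

/-- A step of the dynamics is again a coupling and loses no ordered mass, so by optimality it
moves no mass from an unordered pair to an ordered one, and it is optimal itself. -/
theorem IsOptimalDefect.of_kernel_pos {P P' : α → α → ℝ} {Q : α × α → α × α → ℝ}
    (hQ : IsMonotoneCoupledKernel s μ μ' P P' Q) {p q : α × α} (hp : IsOptimalDefect s μ μ' p)
    (hq : 0 < Q p q) : IsOptimalDefect s μ μ' q := by
  obtain ⟨hpq, ρ, ⟨hρ, hmax⟩, hρp⟩ := hp
  obtain ⟨h₁, h₂⟩ := hρ.marginals_pos hρp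
  have hQp := hQ.isCouplingOn p h₁ h₂
  have hσ := hQ.isCouplingOn_kernelStep hρ
  have hterm : ∀ p', 0 ≤ ρ p' * ∑ q ∈ s ×ˢ s with q.1 ≤ q.2, Q p' q := fun p' => by
    rw [mul_sum]
    exact sum_nonneg fun q _ => hQ.apply_mul_nonneg hρ p' q
  have hsum : ∑ p' ∈ s ×ˢ s with ¬p'.1 ≤ p'.2, ρ p' * ∑ q ∈ s ×ˢ s with q.1 ≤ q.2, Q p' q = 0 :=
    le_antisymm (by linarith [isMaxOn_iff.1 hmax _ hσ, hQ.orderedMass_kernelStep hρ])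
      (sum_nonneg fun p' _ => hterm p')
  have hp_mem : p ∈ {p ∈ s ×ˢ s | ¬p.1 ≤ p.2} :=
    mem_filter.2 ⟨hρ.mem_of_ne_zero hρp.ne', hpq⟩
  have hO : ∑ q ∈ s ×ˢ s with q.1 ≤ q.2, Q p q = 0 :=
    (mul_eq_zero.1 ((sum_eq_zero_iff_of_nonneg fun p' _ => hterm p').1 hsum p hp_mem)).resolve_left
      hρp.ne'
  refine ⟨fun hle => hq.ne' ?_, kernelStep s Q ρ, ⟨hσ, ?_⟩, ?_⟩
  · exact (sum_eq_zero_iff_of_nonneg fun q _ => hQp.nonneg q).1 hO q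
      (mem_filter.2 ⟨hQp.mem_of_ne_zero hq.ne', hle⟩)
  · refine isMaxOn_iff.2 fun τ hτ => (isMaxOn_iff.1 hmax τ hτ).trans ?_
    rw [hQ.orderedMass_kernelStep hρ, hsum, add_zero]
  · exact (mul_pos hρp hq).trans_le (single_le_sum (fun p' _ => hQ.apply_mul_nonneg hρ p' q)
      (hρ.mem_of_ne_zero hρp.ne'))

end Dynamics

section Quantile

variable {A : Finset ℤ} {α β : ℤ → ℝ}

def tail (A : Finset ℤ) (α : ℤ → ℝ) (k : ℤ) : ℝ := ∑ a ∈ A, if k ≤ a then α a else 0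

theorem tail_sub_tail_add_one (k : ℤ) :
    tail A α k - tail A α (k + 1) = if k ∈ A then α k else 0 := by
  rw [tail, tail, ← sum_sub_distrib, ← sum_ite_eq A k α]
  refine sum_congr rfl fun a _ => ?_
  split_ifs <;> first | (exfalso; omega) | ring

theorem tail_antitone (hα : ∀ a, 0 ≤ α a) : Antitone (tail A α) := fun k l hkl =>
  sum_le_sum fun a _ => by split_ifs <;> first | exact le_rfl | exact hα a | omega

theorem tail_nonneg (hα : ∀ a, 0 ≤ α a) (k : ℤ) : 0 ≤ tail A α k :=
  sum_nonneg fun a _ => by split_ifs <;> first | exact le_rfl | exact hα a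

theorem tail_le_sum (hα : ∀ a, 0 ≤ α a) (k : ℤ) : tail A α k ≤ ∑ a ∈ A, α a :=
  sum_le_sum fun a _ => by split_ifs <;> first | exact le_rfl | exact hα a

theorem tail_of_forall_le {k : ℤ} (hk : ∀ a ∈ A, k ≤ a) : tail A α k = ∑ a ∈ A, α a :=
  sum_congr rfl fun a ha => if_pos (hk a ha)

theorem tail_of_forall_lt {k : ℤ} (hk : ∀ a ∈ A, a < k) : tail A α k = 0 :=
  sum_eq_zero fun a ha => if_neg (hk a ha).not_ge

theorem tail_div (φ : ℤ → ℝ) (c : ℝ) (k : ℤ) :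
    tail A (fun a => φ a / c) k = tail A φ k / c := by
  rw [tail, tail, sum_div]
  exact sum_congr rfl fun a _ => by split_ifs <;> simp

def quantileInterval (A : Finset ℤ) (α : ℤ → ℝ) (a : ℤ) : Set ℝ :=
  Set.Ioc (tail A α (a + 1)) (tail A α a)

theorem measureReal_quantileInterval (hα : ∀ a, 0 ≤ α a) (a : ℤ) :
    volume.real (quantileInterval A α a) = if a ∈ A then α a else 0 := by
  rw [quantileInterval, Real.volume_real_Ioc_of_le (tail_antitone hα (by omega)),
    tail_sub_tail_add_one]

theorem quantileInterval_eq_empty {a : ℤ} (ha : a ∉ A) : quantileInterval A α a = ∅ := by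
  have h := tail_sub_tail_add_one (A := A) (α := α) a
  rw [if_neg ha, sub_eq_zero] at h
  rw [quantileInterval, h, Set.Ioc_self]

theorem quantileInterval_subset (hα : ∀ a, 0 ≤ α a) (a : ℤ) :
    quantileInterval A α a ⊆ Set.Ioc 0 (∑ a ∈ A, α a) :=
  Set.Ioc_subset_Ioc (tail_nonneg hα _) (tail_le_sum hα _)

theorem pairwiseDisjoint_quantileInterval (hα : ∀ a, 0 ≤ α a) :
    Pairwise (Disjoint on quantileInterval A α) := by
  have key : ∀ a b, a < b → Disjoint (quantileInterval A α a) (quantileInterval A α b) :=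
    fun a b hab => Set.disjoint_left.2 fun t ht ht' =>
      (ht.1.trans_le ht'.2).not_ge (tail_antitone hα (by omega))
  intro a b hab
  rcases hab.lt_or_gt with h | h
  · exact key a b h
  · exact (key b a h).symm

theorem Ioc_subset_biUnion_quantileInterval :
    Set.Ioc 0 (∑ a ∈ A, α a) ⊆ ⋃ a ∈ A, quantileInterval A α a := by
  intro t ht
  obtain ⟨lo, hlo⟩ := A.bddBelow
  obtain ⟨hi, hhi⟩ := A.bddAbove
  obtain ⟨b, hb, hbmax⟩ := Int.exists_greatest_of_bdd (P := fun c => t ≤ tail A α c)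
    ⟨hi, fun c hc => by
      by_contra h
      rw [tail_of_forall_lt fun a ha => (hhi ha).trans_lt (not_le.1 h)] at hc
      exact ht.1.not_ge hc⟩
    ⟨lo, (tail_of_forall_le fun a ha => hlo ha).symm ▸ ht.2⟩
  have hlt : tail A α (b + 1) < t := not_le.1 fun h => by linarith [hbmax _ h]
  refine Set.mem_biUnion (x := b) ?_ ⟨hlt, hb⟩
  by_contra hbA
  have hmem : t ∈ quantileInterval A α b := ⟨hlt, hb⟩
  rw [quantileInterval_eq_empty (mem_coe.not.1 hbA)] at hmem
  exact hmem

theorem sum_measureReal_inter_quantileInterval (hα : ∀ a, 0 ≤ α a) {I : Set ℝ}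
    (hI : MeasurableSet I) (hIsub : I ⊆ Set.Ioc 0 (∑ a ∈ A, α a)) :
    ∑ a ∈ A, volume.real (I ∩ quantileInterval A α a) = volume.real I := by
  rw [← measureReal_biUnion_finset
    (fun a _ b _ hab => ((pairwiseDisjoint_quantileInterval hα hab).inter_left' I).inter_right' I)
    (fun a _ => hI.inter measurableSet_Ioc)
    (fun a _ => (measure_mono Set.inter_subset_right).trans_lt measure_Ioc_lt_top |>.ne),
    ← Set.inter_iUnion₂, Set.inter_eq_left.2 (hIsub.trans Ioc_subset_biUnion_quantileInterval)]

/-- The joint law of the upper quantile functions of `α` and `β` at a single uniform point of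
`(0, ∑ a ∈ A, α a]`. -/
def quantileCoupling (A : Finset ℤ) (α β : ℤ → ℝ) (q : ℤ × ℤ) : ℝ :=
  volume.real (quantileInterval A α q.1 ∩ quantileInterval A β q.2)

theorem isCouplingOn_quantileCoupling (hα : ∀ a, 0 ≤ α a) (hβ : ∀ b, 0 ≤ β b)
    (hαA : ∀ a ∉ A, α a = 0) (hβA : ∀ b ∉ A, β b = 0) (hsum : ∑ a ∈ A, α a = ∑ b ∈ A, β b) :
    IsCouplingOn A α β (quantileCoupling A α β) where
  nonneg q := measureReal_nonneg
  eq_zero_of_notMem q hq := by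
    rcases not_and_or.1 (mem_product.not.1 hq) with h | h
    · rw [quantileCoupling, quantileInterval_eq_empty h, Set.empty_inter, measureReal_empty]
    · rw [quantileCoupling, quantileInterval_eq_empty h, Set.inter_empty, measureReal_empty]
  marginal_fst a := by
    simp only [quantileCoupling]
    have hsub : quantileInterval A α a ⊆ Set.Ioc 0 (∑ b ∈ A, β b) :=
      hsum ▸ quantileInterval_subset hα a
    rw [sum_measureReal_inter_quantileInterval (I := quantileInterval A α a) hβ
      measurableSet_Ioc hsub, measureReal_quantileInterval hα]
    split_ifs with ha
    exacts [rfl, (hαA a ha).symm]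
  marginal_snd b := by
    simp only [quantileCoupling, Set.inter_comm (quantileInterval A α _)]
    have hsub : quantileInterval A β b ⊆ Set.Ioc 0 (∑ a ∈ A, α a) :=
      hsum ▸ quantileInterval_subset hβ b
    rw [sum_measureReal_inter_quantileInterval (I := quantileInterval A β b) hα
      measurableSet_Ioc hsub, measureReal_quantileInterval hβ]
    split_ifs with hb
    exacts [rfl, (hβA b hb).symm]

theorem le_of_quantileCoupling_ne_zero (hα : ∀ a, 0 ≤ α a)
    (htail : ∀ k, tail A α k ≤ tail A β k) {q : ℤ × ℤ} (hq : quantileCoupling A α β q ≠ 0) :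
    q.1 ≤ q.2 := by
  by_contra h
  have hanti := tail_antitone (A := A) hα (show q.2 + 1 ≤ q.1 by omega)
  have hempty : quantileInterval A α q.1 ∩ quantileInterval A β q.2 = ∅ :=
    Set.eq_empty_of_forall_notMem fun t ht => by
      linarith [ht.1.2, ht.2.1, htail (q.2 + 1)]
  exact hq (by rw [quantileCoupling, hempty, measureReal_empty])

end Quantile

def AgreeOff {V β : Type*} (x : V) (f g : V → β) : Prop := ∀ y, y ≠ x → f y = g y

section Configurations

variable {V : Type*} {A : Finset ℤ} {x : V} {f g : V → ℤ}

theorem AgreeOff.rfl : AgreeOff x f f := fun _ _ => _root_.rfl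

theorem AgreeOff.symm (h : AgreeOff x g f) : AgreeOff x f g := fun y hy => (h y hy).symm

variable [DecidableEq V]

theorem AgreeOff.update_eq (h : AgreeOff x g f) : update f x (g x) = g :=
  (eq_update_iff.2 ⟨_root_.rfl, h⟩).symm

theorem AgreeOff.update_eq_update (h : AgreeOff x g f) (a : ℤ) : update g x a = update f x a := by
  rw [← h.update_eq, update_idem]

theorem agreeOff_update (f : V → ℤ) (a : ℤ) : AgreeOff x (update f x a) f :=
  fun _ hy => update_of_ne hy a f

variable [Fintype V]

theorem AgreeOff.mem_piFinset (h : AgreeOff x g f) (hf : f ∈ piFinset fun _ : V => A)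
    (hg : g x ∈ A) : g ∈ piFinset fun _ : V => A :=
  Fintype.mem_piFinset.2 fun y => by
    rcases eq_or_ne y x with rfl | hy
    · exact hg
    · exact h y hy ▸ Fintype.mem_piFinset.1 hf y

theorem update_notMem_piFinset {a : ℤ} (ha : a ∉ A) : update f x a ∉ piFinset fun _ : V => A :=
  fun h => ha (by simpa using mem_piFinset.1 h x)

theorem filter_agreeOff_piFinset (hf : f ∈ piFinset fun _ : V => A) :
    {g ∈ piFinset fun _ : V => A | AgreeOff x g f} = A.image (update f x) := by
  ext g
  simp only [mem_filter, mem_image]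
  constructor
  · rintro ⟨hgA, hg⟩
    exact ⟨g x, mem_piFinset.1 hgA x, hg.update_eq⟩
  · rintro ⟨a, ha, rfl⟩
    exact ⟨(agreeOff_update f a).mem_piFinset hf (by simpa using ha), agreeOff_update f a⟩

theorem sum_piFinset_agreeOff (hf : f ∈ piFinset fun _ : V => A) (F : (V → ℤ) → ℝ) :
    ∑ g ∈ piFinset (fun _ : V => A), (if AgreeOff x g f then F g else 0) =
      ∑ a ∈ A, F (update f x a) := by
  rw [← sum_filter, filter_agreeOff_piFinset hf,
    sum_image fun a _ b _ hab => update_injective f x hab]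

def lineLift (x : V) (f : V → ℤ) (α : ℤ → ℝ) (g : V → ℤ) : ℝ :=
  if AgreeOff x g f then α (g x) else 0

def pairLift (x : V) (p : (V → ℤ) × (V → ℤ)) (γ : ℤ × ℤ → ℝ) (q : (V → ℤ) × (V → ℤ)) : ℝ :=
  if AgreeOff x q.1 p.1 ∧ AgreeOff x q.2 p.2 then γ (q.1 x, q.2 x) else 0

theorem sum_lineLift (hf : f ∈ piFinset fun _ : V => A) (α : ℤ → ℝ) :
    ∑ g ∈ piFinset (fun _ : V => A), lineLift x f α g = ∑ a ∈ A, α a := by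
  simp only [lineLift]
  rw [sum_piFinset_agreeOff hf]
  simp

theorem isCouplingOn_pairLift {p : (V → ℤ) × (V → ℤ)} {α β : ℤ → ℝ} {γ : ℤ × ℤ → ℝ}
    (hp₁ : p.1 ∈ piFinset fun _ : V => A) (hp₂ : p.2 ∈ piFinset fun _ : V => A)
    (hγ : IsCouplingOn A α β γ) :
    IsCouplingOn (piFinset fun _ : V => A) (lineLift x p.1 α) (lineLift x p.2 β)
      (pairLift x p γ) where
  nonneg q := by
    unfold pairLift
    split_ifs
    exacts [hγ.nonneg _, le_rfl]
  eq_zero_of_notMem q hq := by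
    unfold pairLift
    split_ifs with h
    · refine hγ.eq_zero_of_notMem _ fun hA => hq ?_
      obtain ⟨h₁, h₂⟩ := mem_product.1 hA
      exact mem_product.2 ⟨h.1.mem_piFinset hp₁ h₁, h.2.mem_piFinset hp₂ h₂⟩
    · rfl
  marginal_fst g := by
    unfold pairLift lineLift
    by_cases hg : AgreeOff x g p.1
    · simp only [hg, true_and]
      rw [sum_piFinset_agreeOff hp₂]
      simpa using hγ.marginal_fst (g x)
    · simp only [hg, false_and, if_false, sum_const_zero]
  marginal_snd h := by
    unfold pairLift lineLift
    by_cases hh : AgreeOff x h p.2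
    · simp only [hh, and_true]
      rw [sum_piFinset_agreeOff hp₁]
      simpa using hγ.marginal_snd (h x)
    · simp only [hh, and_false, if_false, sum_const_zero]

end Configurations

section HeatBath

variable {V : Type*} [DecidableEq V] {μ μ' : (V → ℤ) → ℝ} {A : Finset ℤ} {x : V}
  {f g : V → ℤ}

def lineMass (μ : (V → ℤ) → ℝ) (A : Finset ℤ) (x : V) (f : V → ℤ) : ℝ :=
  ∑ a ∈ A, μ (update f x a)

def condLaw (μ : (V → ℤ) → ℝ) (A : Finset ℤ) (x : V) (f : V → ℤ) (a : ℤ) : ℝ :=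
  μ (update f x a) / lineMass μ A x f

def heatBath (μ : (V → ℤ) → ℝ) (A : Finset ℤ) (x : V) (f : V → ℤ) : (V → ℤ) → ℝ :=
  lineLift x f (condLaw μ A x f)

theorem AgreeOff.lineMass_eq (h : AgreeOff x g f) : lineMass μ A x g = lineMass μ A x f := by
  simp only [lineMass, h.update_eq_update]

theorem condLaw_nonneg (hμ : ∀ f, 0 ≤ μ f) (a : ℤ) : 0 ≤ condLaw μ A x f a :=
  div_nonneg (hμ _) (sum_nonneg fun _ _ => hμ _)

theorem heatBath_apply (g : V → ℤ) :
    heatBath μ A x f g = if AgreeOff x g f then μ g / lineMass μ A x g else 0 := by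
  unfold heatBath lineLift condLaw
  split_ifs with h
  · rw [h.update_eq, h.lineMass_eq]
  · rfl

variable [Fintype V]

theorem le_lineMass (hμ : ∀ f, 0 ≤ μ f) (hf : f ∈ piFinset fun _ : V => A) :
    μ f ≤ lineMass μ A x f := by
  simpa [lineMass] using single_le_sum (f := fun a => μ (update f x a)) (fun a _ => hμ _)
    (mem_piFinset.1 hf x)

theorem tsum_update_eq_lineMass (hμA : ∀ f ∉ piFinset fun _ : V => A, μ f = 0) (f : V → ℤ) :
    ∑' a, μ (update f x a) = lineMass μ A x f :=
  tsum_eq_sum fun _ ha => hμA _ (update_notMem_piFinset ha)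

theorem tsum_ite_update_eq_tail (hμA : ∀ f ∉ piFinset fun _ : V => A, μ f = 0) (f : V → ℤ)
    (k : ℤ) :
    ∑' a, (if k ≤ a then μ (update f x a) else 0) = tail A (fun a => μ (update f x a)) k :=
  tsum_eq_sum fun _ ha => by rw [hμA _ (update_notMem_piFinset ha), ite_self]

theorem lineMass_pos (hμ : ∀ f, 0 ≤ μ f) (hμA : ∀ f ∉ piFinset fun _ : V => A, μ f = 0)
    (hf : 0 < μ f) : 0 < lineMass μ A x f :=
  hf.trans_le (le_lineMass hμ (not_imp_comm.1 (hμA f) hf.ne'))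

theorem condLaw_eq_zero (hμA : ∀ f ∉ piFinset fun _ : V => A, μ f = 0) {a : ℤ} (ha : a ∉ A) :
    condLaw μ A x f a = 0 := by
  rw [condLaw, hμA _ (update_notMem_piFinset ha), zero_div]

theorem sum_condLaw (hμ : ∀ f, 0 ≤ μ f) (hμA : ∀ f ∉ piFinset fun _ : V => A, μ f = 0)
    (hf : 0 < μ f) : ∑ a ∈ A, condLaw μ A x f a = 1 := by
  simp only [condLaw]
  rw [← sum_div]
  exact div_self (lineMass_pos hμ hμA hf).ne'

theorem condLaw_pos (hμ : ∀ f, 0 ≤ μ f) (hμA : ∀ f ∉ piFinset fun _ : V => A, μ f = 0)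
    (h : AgreeOff x g f) (hg : 0 < μ g) : 0 < condLaw μ A x f (g x) := by
  rw [condLaw, h.update_eq, ← h.lineMass_eq]
  exact div_pos hg (lineMass_pos hμ hμA hg)

theorem sum_heatBath (hμ : ∀ f, 0 ≤ μ f) (hμA : ∀ f ∉ piFinset fun _ : V => A, μ f = 0)
    (hf : 0 < μ f) : ∑ g ∈ piFinset (fun _ : V => A), heatBath μ A x f g = 1 := by
  rw [heatBath, sum_lineLift (not_imp_comm.1 (hμA f) hf.ne'), sum_condLaw hμ hμA hf]

theorem sum_mul_heatBath (hμ : ∀ f, 0 ≤ μ f) (hμA : ∀ f ∉ piFinset fun _ : V => A, μ f = 0)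
    (g : V → ℤ) : ∑ f ∈ piFinset (fun _ : V => A), μ f * heatBath μ A x f g = μ g := by
  simp only [heatBath_apply]
  rcases (hμ g).eq_or_lt with hg | hg
  · simp [← hg]
  have hgA : g ∈ piFinset fun _ : V => A := not_imp_comm.1 (hμA g) hg.ne'
  calc ∑ f ∈ piFinset (fun _ : V => A), μ f * (if AgreeOff x g f then μ g / lineMass μ A x g else 0)
      = ∑ f ∈ piFinset (fun _ : V => A),
          (if AgreeOff x f g then μ f * (μ g / lineMass μ A x g) else 0) :=
        sum_congr rfl fun f _ => by
          by_cases h : AgreeOff x f g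
          · rw [if_pos h.symm, if_pos h]
          · rw [if_neg fun h' => h h'.symm, if_neg h, mul_zero]
    _ = μ g := by
        rw [sum_piFinset_agreeOff hgA, ← sum_mul]
        exact mul_div_cancel₀ _ (lineMass_pos hμ hμA hg).ne'

end HeatBath

section CoupledHeatBath

variable {V : Type*} [DecidableEq V] {μ μ' : (V → ℤ) → ℝ} {A : Finset ℤ} {x : V}
  {p : (V → ℤ) × (V → ℤ)}

/-- Holley's condition `μ[h x ≥ k | χ] ≤ μ'[h x ≥ k | χ']`, cross-multiplied so that it also makes
sense on lines of zero mass. -/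
def HolleyOn (A : Finset ℤ) (μ μ' : (V → ℤ) → ℝ) : Prop :=
  ∀ (x : V) (k : ℤ) (χ χ' : V → ℤ), (∀ y, y ≠ x → χ y ≤ χ' y) →
    tail A (fun a => μ (update χ x a)) k * lineMass μ' A x χ' ≤
      tail A (fun a => μ' (update χ' x a)) k * lineMass μ A x χ

theorem HolleyOn.tail_condLaw_le (hH : HolleyOn A μ μ') {χ χ' : V → ℤ}
    (hχ : ∀ y, y ≠ x → χ y ≤ χ' y) (hL : 0 < lineMass μ A x χ) (hL' : 0 < lineMass μ' A x χ')
    (k : ℤ) : tail A (condLaw μ A x χ) k ≤ tail A (condLaw μ' A x χ') k := by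
  unfold condLaw
  rw [tail_div, tail_div, div_le_div_iff₀ hL hL']
  exact hH x k χ χ' hχ

/-- Unordered pairs are updated independently, so that each coordinate can follow its own
irreducibility path. -/
def siteCoupling (μ μ' : (V → ℤ) → ℝ) (A : Finset ℤ) (x : V) (p : (V → ℤ) × (V → ℤ)) :
    ℤ × ℤ → ℝ :=
  if p.1 ≤ p.2 then quantileCoupling A (condLaw μ A x p.1) (condLaw μ' A x p.2)
  else fun q => condLaw μ A x p.1 q.1 * condLaw μ' A x p.2 q.2

def coupledKernel (μ μ' : (V → ℤ) → ℝ) (A : Finset ℤ) (x : V) (p : (V → ℤ) × (V → ℤ)) :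
    (V → ℤ) × (V → ℤ) → ℝ :=
  pairLift x p (siteCoupling μ μ' A x p)

variable [Fintype V] (hμ : ∀ f, 0 ≤ μ f) (hμ' : ∀ f, 0 ≤ μ' f)
  (hμA : ∀ f ∉ piFinset fun _ : V => A, μ f = 0) (hμ'A : ∀ f ∉ piFinset fun _ : V => A, μ' f = 0)
include hμ hμ' hμA hμ'A

theorem isCouplingOn_siteCoupling (hp₁ : 0 < μ p.1) (hp₂ : 0 < μ' p.2) :
    IsCouplingOn A (condLaw μ A x p.1) (condLaw μ' A x p.2) (siteCoupling μ μ' A x p) := by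
  unfold siteCoupling
  split_ifs
  · refine isCouplingOn_quantileCoupling (condLaw_nonneg hμ) (condLaw_nonneg hμ')
      (fun a => condLaw_eq_zero hμA) (fun b => condLaw_eq_zero hμ'A) ?_
    rw [sum_condLaw hμ hμA hp₁, sum_condLaw hμ' hμ'A hp₂]
  · exact isCouplingOn_mul (condLaw_nonneg hμ) (condLaw_nonneg hμ')
      (fun a => condLaw_eq_zero hμA) (fun b => condLaw_eq_zero hμ'A) (sum_condLaw hμ hμA hp₁)
      (sum_condLaw hμ' hμ'A hp₂)

theorem isMonotoneCoupledKernel_coupledKernel (hH : HolleyOn A μ μ') (x : V) :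
    IsMonotoneCoupledKernel (piFinset fun _ : V => A) μ μ' (heatBath μ A x) (heatBath μ' A x)
      (coupledKernel μ μ' A x) where
  isCouplingOn p hp₁ hp₂ :=
    isCouplingOn_pairLift (not_imp_comm.1 (hμA _) hp₁.ne') (not_imp_comm.1 (hμ'A _) hp₂.ne')
      (isCouplingOn_siteCoupling hμ hμ' hμA hμ'A hp₁ hp₂)
  sum_eq_one f hf := sum_heatBath hμ hμA hf
  invariant := sum_mul_heatBath hμ hμA
  invariant' := sum_mul_heatBath hμ' hμ'A
  le_of_le p hp₁ hp₂ hle q hq := by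
    unfold coupledKernel pairLift at hq
    split_ifs at hq with hq'
    · intro y
      rcases eq_or_ne y x with rfl | hy
      · rw [siteCoupling, if_pos hle] at hq
        exact le_of_quantileCoupling_ne_zero (condLaw_nonneg hμ)
          (hH.tail_condLaw_le (fun z _ => hle z) (lineMass_pos hμ hμA hp₁)
            (lineMass_pos hμ' hμ'A hp₂)) hq
      · rw [hq'.1 y hy, hq'.2 y hy]
        exact hle y
    · exact absurd rfl hq

theorem coupledKernel_pos (hp : ¬p.1 ≤ p.2) {h k : V → ℤ} (hh : AgreeOff x h p.1)
    (hk : AgreeOff x k p.2) (hh₀ : 0 < μ h) (hk₀ : 0 < μ' k) :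
    0 < coupledKernel μ μ' A x p (h, k) := by
  rw [coupledKernel, pairLift, if_pos ⟨hh, hk⟩, siteCoupling, if_neg hp]
  exact mul_pos (condLaw_pos hμ hμA hh hh₀) (condLaw_pos hμ' hμ'A hk hk₀)

end CoupledHeatBath
end

section Holley

variable {V : Type*} {μ μ' : (V → ℤ) → ℝ}

def SingleSiteStep (μ : (V → ℤ) → ℝ) (f g : V → ℤ) : Prop :=
  0 < μ g ∧ ∃ x, AgreeOff x g f

theorem IrreducibleSS.reflTransGen (hirr : IrreducibleSS μ) {f g : V → ℤ} (hf : 0 < μ f)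
    (hg : 0 < μ g) : ReflTransGen (SingleSiteStep μ) f g := by
  obtain ⟨m, path, h0, hm, hpos, hstep⟩ := hirr f g hf hg
  have key : ∀ i ≤ m, ReflTransGen (SingleSiteStep μ) f (path i) := by
    intro i
    induction i with
    | zero => exact fun _ => h0 ▸ ReflTransGen.refl
    | succ i ih => exact fun hi => (ih (by omega)).tail ⟨hpos _ hi, hstep i (by omega)⟩
  exact hm ▸ key m le_rfl

def PairStep (μ μ' : (V → ℤ) → ℝ) (p q : (V → ℤ) × (V → ℤ)) : Prop :=
  (SingleSiteStep μ p.1 q.1 ∧ q.2 = p.2) ∨ (q.1 = p.1 ∧ SingleSiteStep μ' p.2 q.2)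

theorem reflTransGen_pairStep (hirr : IrreducibleSS μ) (hirr' : IrreducibleSS μ')
    {p q : (V → ℤ) × (V → ℤ)} (hp : 0 < μ p.1 ∧ 0 < μ' p.2) (hq : 0 < μ q.1 ∧ 0 < μ' q.2) :
    ReflTransGen (PairStep μ μ') p q :=
  ((hirr.reflTransGen hp.1 hq.1).lift (·, p.2) fun _ _ h => Or.inl ⟨h, rfl⟩).trans
    ((hirr'.reflTransGen hp.2 hq.2).lift (q.1, ·) fun _ _ h => Or.inr ⟨rfl, h⟩)

theorem exists_monotone_coupling_of_holleyOn [Fintype V] [DecidableEq V] {A : Finset ℤ}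
    (hμ : ∀ f, 0 ≤ μ f) (hμ' : ∀ f, 0 ≤ μ' f) (hμA : ∀ f ∉ piFinset fun _ : V => A, μ f = 0)
    (hμ'A : ∀ f ∉ piFinset fun _ : V => A, μ' f = 0)
    (hμ1 : ∑ f ∈ piFinset (fun _ : V => A), μ f = 1)
    (hμ'1 : ∑ f ∈ piFinset (fun _ : V => A), μ' f = 1) (hH : HolleyOn A μ μ')
    (hirr : IrreducibleSS μ) (hirr' : IrreducibleSS μ')
    (hinit : ∃ f g : V → ℤ, f ≤ g ∧ 0 < μ f ∧ 0 < μ' g) :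
    ∃ ρ, IsCouplingOn (piFinset fun _ : V => A) μ μ' ρ ∧ ∀ q, ρ q ≠ 0 → q.1 ≤ q.2 := by
  set s := piFinset fun _ : V => A
  have hK := isMonotoneCoupledKernel_coupledKernel hμ hμ' hμA hμ'A hH
  have hmove : ∀ p q, IsOptimalDefect s μ μ' p → PairStep μ μ' p q →
      IsOptimalDefect s μ μ' q := by
    rintro ⟨f, g⟩ ⟨h, k⟩ hp (⟨⟨hh, x, hx⟩, rfl⟩ | ⟨rfl, ⟨hk, x, hx⟩⟩)
    · exact hp.of_kernel_pos (hK x)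
        (coupledKernel_pos hμ hμ' hμA hμ'A hp.1 hx AgreeOff.rfl hh hp.pos.2)
    · exact hp.of_kernel_pos (hK x)
        (coupledKernel_pos hμ hμ' hμA hμ'A hp.1 AgreeOff.rfl hx hp.pos.1 hk)
  obtain ⟨ρ, hρ⟩ := exists_isOptimalCoupling ⟨_, isCouplingOn_mul hμ hμ' hμA hμ'A hμ1 hμ'1⟩
  obtain ⟨f₀, g₀, h₀, hf₀, hg₀⟩ := hinit
  refine ⟨ρ, hρ.1, fun p hp => by_contra fun hpq => ?_⟩
  have hdef : IsOptimalDefect s μ μ' p := ⟨hpq, ρ, hρ, (hρ.1.nonneg p).lt_of_ne' hp⟩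
  have hpath := reflTransGen_pairStep hirr hirr' hdef.pos (q := (f₀, g₀)) ⟨hf₀, hg₀⟩
  have hdef₀ : IsOptimalDefect s μ μ' (f₀, g₀) := by
    generalize (f₀, g₀) = q at hpath ⊢
    induction hpath with
    | refl => exact hdef
    | tail _ hstep ih => exact hmove _ _ ih hstep
  exact hdef₀.1 h₀

end Holley

theorem stmt_14 {V : Type*} [Fintype V] [DecidableEq V]
    (μ μ' : (V → ℤ) → ℝ)
    (hnn : ∀ f, 0 ≤ μ f) (hnn' : ∀ f, 0 ≤ μ' f)
    (hsum : HasSum μ 1) (hsum' : HasSum μ' 1)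
    (hfin : (Function.support μ).Finite) (hfin' : (Function.support μ').Finite)
    (hirr : IrreducibleSS μ) (hirr' : IrreducibleSS μ')
    (hinit : ∃ f g : V → ℤ, f ≤ g ∧ 0 < μ f ∧ 0 < μ' g)
    (hHolley : ∀ (x : V) (k : ℤ) (χ χ' : V → ℤ), (∀ y : V, y ≠ x → χ y ≤ χ' y) →
      (∑' a : ℤ, if k ≤ a then μ (Function.update χ x a) else 0) *
          (∑' a : ℤ, μ' (Function.update χ' x a)) ≤
        (∑' a : ℤ, if k ≤ a then μ' (Function.update χ' x a) else 0) *
          (∑' a : ℤ, μ (Function.update χ x a))) :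
    (∃ ν : (V → ℤ) → (V → ℤ) → ℝ,
        (∀ f g, 0 ≤ ν f g) ∧
        (∀ f g, ν f g ≠ 0 → f ≤ g) ∧
        (∀ f, (∑' g, ν f g) = μ f) ∧
        (∀ g, (∑' f, ν f g) = μ' g)) ∧
    ∀ F : (V → ℤ) → ℝ, Monotone F →
      (∑' f, μ f * F f) ≤ ∑' f, μ' f * F f := by
  set A : Finset ℤ := (hfin.toFinset ∪ hfin'.toFinset).biUnion fun f => univ.image f
  have hA : ∀ f ∈ hfin.toFinset ∪ hfin'.toFinset, f ∈ piFinset fun _ : V => A := fun f hf =>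
    mem_piFinset.2 fun x => mem_biUnion.2 ⟨f, hf, mem_image_of_mem f (mem_univ x)⟩
  have hμA : ∀ f ∉ piFinset fun _ : V => A, μ f = 0 := fun f hf =>
    by_contra fun h => hf (hA f (mem_union_left _ (hfin.mem_toFinset.2 h)))
  have hμ'A : ∀ f ∉ piFinset fun _ : V => A, μ' f = 0 := fun f hf =>
    by_contra fun h => hf (hA f (mem_union_right _ (hfin'.mem_toFinset.2 h)))
  have hH : HolleyOn A μ μ' := fun x k χ χ' hχ => by
    simpa only [tsum_ite_update_eq_tail hμA, tsum_ite_update_eq_tail hμ'A,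
      tsum_update_eq_lineMass hμA, tsum_update_eq_lineMass hμ'A] using hHolley x k χ χ' hχ
  obtain ⟨ρ, hρ, hle⟩ := exists_monotone_coupling_of_holleyOn hnn hnn' hμA hμ'A
    (hsum.unique (hasSum_sum_of_ne_finset_zero hμA)).symm
    (hsum'.unique (hasSum_sum_of_ne_finset_zero hμ'A)).symm hH hirr hirr' hinit
  exact ⟨⟨fun f g => ρ (f, g), fun f g => hρ.nonneg _, fun f g => hle (f, g), hρ.tsum_fst,
    hρ.tsum_snd⟩, fun F hF => hρ.tsum_mul_le_of_monotone hle hF⟩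
end

section
/- (Weight transformation under the ±3 → ±1 injection.) Let D=(V,E) be a finite graph with edge weights c_e ≥ 1, x ∈ V with neighbourhood N_x, and let χ: V∖{x} → 2ℤ+1 be a fixed positive configuration with χ(y) ∈ {1,3} for all y ∈ N_x. For a height function h with h|_{V∖{x}} of absolute value χ and |h(x)| = 3, let T(h) be the function obtained by replacing h(x) = ±3 with ±1 (same sign). Then T(h) is again a height function, and W(T(h)) = (∏_{y∈N_x: χ(y)=1} c_{⟨x,y⟩} / ∏_{y∈N_x: χ(y)=3} c_{⟨x,y⟩}) · W(h), where W(h) = ∏_{e=⟨v,w⟩∈E} c_e^{𝟙{h(v)=h(w)}}. -/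
/-- The weight of a height function: a factor `c e` for each edge on which `h` is constant. -/
def heightWeight {V : Type*} [Fintype V] [DecidableEq V] (G : SimpleGraph V)
    [DecidableRel G.Adj] (c : Sym2 V → ℝ) (h : V → ℤ) : ℝ :=
  ∏ e ∈ G.edgeFinset, if ∀ v ∈ e, ∀ w ∈ e, h v = h w then c e else 1

/-
Since `|h x| = 3` and `h` moves by at most `2` along edges, every neighbour `y` of `x` carries
the sign of `h x`, so `h y = ± χ y` with that common sign. Hence the edge `⟨x, y⟩` is flat for `h`
exactly when `χ y = 3` and flat for `T h` exactly when `χ y = 1`, while the edges away from `x`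
contribute the same factors to both weights.
-/

section HeightArithmetic

variable {a b : ℤ}

theorem eq_iff_abs_eq_three_of_abs_sub_le_two (ha : |a| = 3) (hab : |a - b| ≤ 2) :
    a = b ↔ |b| = 3 := by
  rw [abs_eq (by norm_num)] at ha ⊢
  rw [abs_le] at hab
  omega

theorem sign_eq_iff_abs_eq_one_of_abs_sub_le_two (ha : |a| = 3) (hab : |a - b| ≤ 2) :
    (if 0 < a then 1 else -1) = b ↔ |b| = 1 := by
  rw [abs_eq (by norm_num)] at ha ⊢
  rw [abs_le] at hab
  split_ifs <;> omega

theorem abs_sign_sub_le_two (hb : |b| = 1 ∨ |b| = 3) (hab : |a - b| ≤ 2) :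
    |(if 0 < a then 1 else -1) - b| ≤ 2 := by
  rw [abs_eq (by norm_num), abs_eq (by norm_num)] at hb
  rw [abs_le] at hab ⊢
  split_ifs <;> omega

end HeightArithmetic

section

variable {V : Type*} (G : SimpleGraph V)

theorem IsHeight.update [DecidableEq V] {h : V → ℤ} (hh : IsHeight G h) {x : V} {a : ℤ}
    (ha : Odd a) (hxa : ∀ y, G.Adj x y → |a - h y| ≤ 2) :
    IsHeight G (Function.update h x a) := by
  refine ⟨fun v => ?_, fun v w hvw => ?_⟩
  · rcases eq_or_ne v x with rfl | hv
    · simpa using ha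
    · simpa [hv] using hh.1 v
  rcases eq_or_ne v x with rfl | hv
  · simpa [hvw.ne'] using hxa w hvw
  rcases eq_or_ne w x with rfl | hw
  · simpa [hv, abs_sub_comm] using hxa v hvw.symm
  simpa [hv, hw] using hh.2 v w hvw

variable [Fintype V] [DecidableEq V] [DecidableRel G.Adj]

theorem SimpleGraph.filter_mem_edgeFinset_eq_image (x : V) :
    {e ∈ G.edgeFinset | x ∈ e} = (G.neighborFinset x).image (s(x, ·)) := by
  ext e
  induction e with
  | h a b =>
    simp only [Finset.mem_filter, SimpleGraph.mem_edgeFinset, SimpleGraph.mem_edgeSet,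
      Sym2.mem_iff, Finset.mem_image, SimpleGraph.mem_neighborFinset, Sym2.eq_iff]
    constructor
    · rintro ⟨hab, rfl | rfl⟩
      · exact ⟨b, hab, .inl ⟨rfl, rfl⟩⟩
      · exact ⟨a, hab.symm, .inr ⟨rfl, rfl⟩⟩
    · rintro ⟨y, hy, ⟨rfl, rfl⟩ | ⟨rfl, rfl⟩⟩
      · exact ⟨hy, .inl rfl⟩
      · exact ⟨hy.symm, .inr rfl⟩

theorem heightWeight_eq_prod_neighborFinset_mul (c : Sym2 V → ℝ) (g : V → ℤ) (x : V) :
    heightWeight G c g =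
      (∏ y ∈ G.neighborFinset x, if g x = g y then c s(x, y) else 1) *
        ∏ e ∈ G.edgeFinset with x ∉ e, if ∀ v ∈ e, ∀ w ∈ e, g v = g w then c e else 1 := by
  rw [heightWeight, ← Finset.prod_filter_mul_prod_filter_not G.edgeFinset (x ∈ ·),
    G.filter_mem_edgeFinset_eq_image, Finset.prod_image fun _ _ _ _ => Sym2.congr_right.mp]
  congr 1
  refine Finset.prod_congr rfl fun y _ => if_congr ?_ rfl rfl
  simp only [Sym2.forall_mem_pair]
  grind

theorem heightWeight_update_mul (c : Sym2 V → ℝ) (g : V → ℤ) (x : V) (a : ℤ) :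
    heightWeight G c (Function.update g x a) *
        ∏ y ∈ G.neighborFinset x, (if g x = g y then c s(x, y) else 1) =
      heightWeight G c g * ∏ y ∈ G.neighborFinset x, (if a = g y then c s(x, y) else 1) := by
  have hfar : ∀ e ∈ {e ∈ G.edgeFinset | x ∉ e},
      (if ∀ v ∈ e, ∀ w ∈ e, Function.update g x a v = Function.update g x a w then c e else 1) =
        if ∀ v ∈ e, ∀ w ∈ e, g v = g w then c e else 1 := by
    intro e he
    have hv : ∀ v ∈ e, Function.update g x a v = g v := fun v hv =>
      Function.update_of_ne (by rintro rfl; exact (Finset.mem_filter.mp he).2 hv) ..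
    exact if_congr (by grind) rfl rfl
  have hnear : ∀ y ∈ G.neighborFinset x, Function.update g x a y = g y :=
    fun y hy => Function.update_of_ne (G.ne_of_adj ((G.mem_neighborFinset x y).mp hy)).symm ..
  rw [heightWeight_eq_prod_neighborFinset_mul G c _ x,
    heightWeight_eq_prod_neighborFinset_mul G c g x, Function.update_self,
    Finset.prod_congr rfl fun y hy => by rw [hnear y hy], Finset.prod_congr rfl hfar]
  ring

end

theorem stmt_17 {V : Type*} [Fintype V] [DecidableEq V] (G : SimpleGraph V)
    [DecidableRel G.Adj] (c : Sym2 V → ℝ) (hc : ∀ e ∈ G.edgeSet, 1 ≤ c e)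
    (x : V) (χ : V → ℤ) (hχ : ∀ y ∈ G.neighborFinset x, χ y = 1 ∨ χ y = 3)
    (h : V → ℤ) (hh : IsHeight G h)
    (habs : ∀ y : V, y ≠ x → |h y| = χ y) (hx3 : |h x| = 3) :
    IsHeight G (Function.update h x (if 0 < h x then 1 else -1)) ∧
    heightWeight G c (Function.update h x (if 0 < h x then 1 else -1)) =
      ((∏ y ∈ (G.neighborFinset x).filter fun y => χ y = 1, c s(x, y)) /
          ∏ y ∈ (G.neighborFinset x).filter fun y => χ y = 3, c s(x, y)) *
        heightWeight G c h := by
  have hnbr : ∀ y ∈ G.neighborFinset x, |h x - h y| ≤ 2 ∧ |h y| = χ y := fun y hy =>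
    have hxy := (G.mem_neighborFinset x y).mp hy
    ⟨hh.2 x y hxy, habs y hxy.ne'⟩
  refine ⟨hh.update G (by split_ifs <;> simp) fun y hxy => ?_, ?_⟩
  · obtain ⟨hdiff, hχy⟩ := hnbr y ((G.mem_neighborFinset x y).mpr hxy)
    exact abs_sign_sub_le_two (hχy ▸ hχ y ((G.mem_neighborFinset x y).mpr hxy)) hdiff
  have hlocal_h : (∏ y ∈ G.neighborFinset x, if h x = h y then c s(x, y) else 1) =
      ∏ y ∈ G.neighborFinset x with χ y = 3, c s(x, y) := by
    rw [Finset.prod_filter]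
    refine Finset.prod_congr rfl fun y hy => if_congr ?_ rfl rfl
    rw [eq_iff_abs_eq_three_of_abs_sub_le_two hx3 (hnbr y hy).1, (hnbr y hy).2]
  have hlocal_sign : (∏ y ∈ G.neighborFinset x,
        if (if 0 < h x then 1 else -1) = h y then c s(x, y) else 1) =
      ∏ y ∈ G.neighborFinset x with χ y = 1, c s(x, y) := by
    rw [Finset.prod_filter]
    refine Finset.prod_congr rfl fun y hy => if_congr ?_ rfl rfl
    rw [sign_eq_iff_abs_eq_one_of_abs_sub_le_two hx3 (hnbr y hy).1, (hnbr y hy).2]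
  have hpos : 0 < ∏ y ∈ G.neighborFinset x with χ y = 3, c s(x, y) :=
    Finset.prod_pos fun y hy => one_pos.trans_le <| hc _ <|
      (G.mem_neighborFinset x y).mp (Finset.mem_filter.mp hy).1
  have hweight := heightWeight_update_mul G c h x (if 0 < h x then 1 else -1)
  rw [hlocal_h, hlocal_sign] at hweight
  rw [div_mul_eq_mul_div, eq_div_iff hpos.ne', hweight, mul_comm]
end
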